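/- arXiv:1908.00865 — 8 statements merged into one kernel-verified Lean document; each statement's English description precedes it below -/
import Mathlib

section
/- Let f, g : ℝⁿ → ℝ be convex and differentiable, let w : ℝⁿ → ℝ be differentiable, and let λ > 0. Let x ∈ ℝⁿ and suppose x̄ ∈ ℝⁿ satisfies x̄ + λ∇f(x̄) = x (i.e. x̄ = J_{λ∇f}(x)). Set z := (2x̄ − x) − λ∇w(x̄), and suppose z̄ ∈ ℝⁿ satisfies z̄ + λ∇g(z̄) = z (i.e. z̄ = J_{λ∇g}(z)). Then ∇f(x̄) + ∇g(x̄) + ∇w(x̄) = 0 if and only if x = ½x + ½(2z̄ − z) − ½λ∇w(x̄); equivalently, if and only if z̄ = x̄. (This says x is a fixed point of the operator P = ½I + ½C_{λ∇g}∘(C_{λ∇f} − λ∇w∘J_{λ∇f}) − ½λ∇w∘J_{λ∇f}, where C_{λ∇φ} = 2J_{λ∇φ} − I is the Cayley operator, if and only if J_{λ∇f}(x) is a zero of ∇f + ∇g + ∇w.) -/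
/-!
Since `x = x̄ + λ∇f(x̄)`, we have `z = x̄ - λ(∇f + ∇w)(x̄)`. Then `∇f + ∇g + ∇w` vanishes at `x̄`
exactly when `x̄ + λ∇g(x̄) = z`, i.e. when `x̄` solves the same resolvent equation as `z̄`. The
gradient of a convex function is monotone (restrict to a line and use that the derivative of a convex
function of one variable is monotone), so `I + λ∇g` is injective and the resolvent solution is
unique. The fixed-point equation for `x` reduces to `z̄ = x̄` by linear algebra alone.
-/

open Set
open scoped RealInnerProductSpace

section

variable {E : Type*} [NormedAddCommGroup E] [InnerProductSpace ℝ E]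

theorem Differentiable.hasDerivAt_comp_lineMap [CompleteSpace E] {g : E → ℝ}
    (hgd : Differentiable ℝ g) (a b : E) (t : ℝ) :
    HasDerivAt (g ∘ AffineMap.lineMap a b) ⟪gradient g (AffineMap.lineMap a b t), b - a⟫ t :=
  (hgd _).hasGradientAt.hasFDerivAt.comp_hasDerivAt t AffineMap.hasDerivAt_lineMap

theorem ConvexOn.inner_gradient_sub_gradient_nonneg [CompleteSpace E] {g : E → ℝ}
    (hg : ConvexOn ℝ univ g) (hgd : Differentiable ℝ g) (a b : E) :
    0 ≤ ⟪gradient g a - gradient g b, a - b⟫ := by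
  have hderiv := hgd.hasDerivAt_comp_lineMap b a
  have hmono := (hg.comp_affineMap (AffineMap.lineMap b a)).monotoneOn_deriv
    (fun t _ => (hderiv t).differentiableAt)
  have h01 := hmono (by simp) (by simp) zero_le_one
  rw [(hderiv 0).deriv, (hderiv 1).deriv, AffineMap.lineMap_apply_zero,
    AffineMap.lineMap_apply_one] at h01
  rw [inner_sub_left]
  linarith

lemma injective_add_smul_of_inner_nonneg {T : E → E}
    (hT : ∀ a b, 0 ≤ ⟪T a - T b, a - b⟫) {lam : ℝ} (hlam : 0 ≤ lam) :
    Function.Injective (fun y => y + lam • T y) := by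
  intro a b hab
  have hdiff : a - b = -(lam • (T a - T b)) := by
    linear_combination (norm := module) hab
  have hsq : ‖a - b‖ ^ 2 ≤ 0 := by
    calc ‖a - b‖ ^ 2 = ⟪a - b, a - b⟫ := (real_inner_self_eq_norm_sq _).symm
      _ = -(lam * ⟪T a - T b, a - b⟫) := by
        nth_rw 1 [hdiff]
        rw [inner_neg_left, real_inner_smul_left]
      _ ≤ 0 := neg_nonpos.mpr (mul_nonneg hlam (hT a b))
  rw [← sub_eq_zero, ← norm_eq_zero]
  nlinarith [norm_nonneg (a - b)]

end

theorem stmt_2_general {n : ℕ} (f g w : EuclideanSpace ℝ (Fin n) → ℝ)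
    (hg : ConvexOn ℝ Set.univ g)
    (hgd : Differentiable ℝ g)
    (lam : ℝ) (hlam : 0 < lam)
    (x xbar z zbar : EuclideanSpace ℝ (Fin n))
    (hxbar : xbar + lam • gradient f xbar = x)
    (hz : z = ((2 : ℝ) • xbar - x) - lam • gradient w xbar)
    (hzbar : zbar + lam • gradient g zbar = z) :
    (gradient f xbar + gradient g xbar + gradient w xbar = 0 ↔
      x = (1 / 2 : ℝ) • x + (1 / 2 : ℝ) • ((2 : ℝ) • zbar - z)
        - ((1 / 2) * lam) • gradient w xbar) ∧
    (gradient f xbar + gradient g xbar + gradient w xbar = 0 ↔ zbar = xbar) := by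
  have hz' : z = xbar - lam • (gradient f xbar + gradient w xbar) := by
    rw [hz, ← hxbar]
    module
  have hzero : gradient f xbar + gradient g xbar + gradient w xbar = 0 ↔
      xbar + lam • gradient g xbar = z := by
    rw [hz', ← smul_eq_zero_iff_right hlam.ne']
    constructor <;> intro h <;> linear_combination (norm := module) h
  have hresolvent : xbar + lam • gradient g xbar = z ↔ zbar = xbar :=
    ⟨fun h => injective_add_smul_of_inner_nonneg (hg.inner_gradient_sub_gradient_nonneg hgd)
      hlam.le (hzbar.trans h.symm), fun h => h ▸ hzbar⟩
  have hfixed : x = (1 / 2 : ℝ) • x + (1 / 2 : ℝ) • ((2 : ℝ) • zbar - z)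
      - ((1 / 2) * lam) • gradient w xbar ↔ zbar = xbar := by
    rw [hz, ← sub_eq_zero (a := zbar)]
    constructor <;> intro h <;> linear_combination (norm := module) -h
  exact ⟨(hzero.trans hresolvent).trans hfixed.symm, hzero.trans hresolvent⟩

/-- Fixed points of the Davis-Yin operator
`P = ½I + ½C_{λ∇g}∘(C_{λ∇f} − λ∇w∘J_{λ∇f}) − ½λ∇w∘J_{λ∇f}` correspond to zeros of
`∇f + ∇g + ∇w` at `x̄ = J_{λ∇f}(x)`; equivalently `z̄ = x̄`. -/
theorem stmt_2 {n : ℕ} (f g w : EuclideanSpace ℝ (Fin n) → ℝ)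
    (hf : ConvexOn ℝ Set.univ f) (hg : ConvexOn ℝ Set.univ g)
    (hfd : Differentiable ℝ f) (hgd : Differentiable ℝ g) (hwd : Differentiable ℝ w)
    (lam : ℝ) (hlam : 0 < lam)
    (x xbar z zbar : EuclideanSpace ℝ (Fin n))
    (hxbar : xbar + lam • gradient f xbar = x)
    (hz : z = ((2 : ℝ) • xbar - x) - lam • gradient w xbar)
    (hzbar : zbar + lam • gradient g zbar = z) :
    (gradient f xbar + gradient g xbar + gradient w xbar = 0 ↔
      x = (1 / 2 : ℝ) • x + (1 / 2 : ℝ) • ((2 : ℝ) • zbar - z)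
        - ((1 / 2) * lam) • gradient w xbar) ∧
    (gradient f xbar + gradient g xbar + gradient w xbar = 0 ↔ zbar = xbar) :=
  stmt_2_general f g w hg hgd lam hlam x xbar z zbar hxbar hz hzbar
end

section
/- Let f, g : ℝⁿ → ℝ be convex and differentiable and let w : ℝⁿ → ℝ be differentiable with continuous gradient. Let λ > 0 and let J_f, J_g : ℝⁿ → ℝⁿ be functions satisfying J_f(u) + λ∇f(J_f(u)) = u and J_g(u) + λ∇g(J_g(u)) = u for every u ∈ ℝⁿ. Let γ_k ∈ [0,1] for all k, and let sequences (x_k), (x̂_k) in ℝⁿ satisfy, for all k ≥ 0, x̂_{k+1} = x_{k+1} + γ_{k+1}(x_{k+1} − x_k) and the accelerated Davis–Yin recursion x_{k+1} = x̂_k + J_g( 2J_f(x̂_k) − x̂_k − λ∇w(J_f(x̂_k)) ) − J_f(x̂_k). If x_k → x_∞ for some x_∞ ∈ ℝⁿ, then J_f(x̂_k) → x̄_∞ := J_f(x_∞) and ∇f(x̄_∞) + ∇g(x̄_∞) + ∇w(x̄_∞) = 0, i.e. x̄_∞ is a minimizer of f + g + w. -/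
/-!
Since `∇f` and `∇g` are monotone, the resolvents `J_f`, `J_g` are nonexpansive, hence continuous.
The momentum term `γ_{k+1} (x_{k+1} - x_k)` vanishes in the limit, so `x̂_k → x_∞` as well, and
passing to the limit in `x_{k+1} = T(x̂_k)`, with `T` the (continuous) Davis–Yin operator, shows
that `x_∞` is a fixed point of `T`. At a fixed point `J_g(2 J_f x - x - λ ∇w(J_f x)) = J_f x`,
and adding the two resolvent identities gives `λ (∇f + ∇g + ∇w)(J_f x) = 0`.
-/

open Filter Topology InnerProductSpace

section Resolvent

variable {E : Type*} [NormedAddCommGroup E] [InnerProductSpace ℝ E] [CompleteSpace E]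
  {f : E → ℝ}

theorem ConvexOn.inner_gradient_sub_gradient_nonneg_s3 (hf : ConvexOn ℝ Set.univ f)
    (hfd : Differentiable ℝ f) (a b : E) :
    0 ≤ ⟪gradient f a - gradient f b, a - b⟫_ℝ := by
  -- restrict `f` to the line through `b` and `a`, whose derivative is monotone
  set c : ℝ →ᵃ[ℝ] E := AffineMap.lineMap b a
  have hderiv : ∀ t, HasDerivAt (f ∘ c) ⟪gradient f (c t), a - b⟫_ℝ t := fun t => by
    simpa [toDual_apply_apply, real_inner_comm] using
      (hfd (c t)).hasGradientAt.hasFDerivAt.comp_hasDerivAt t AffineMap.hasDerivAt_lineMap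
  have hmono := (hf.comp_affineMap c).monotoneOn_deriv fun t _ => (hderiv t).differentiableAt
  have h01 := hmono (Set.mem_univ 0) (Set.mem_univ 1) zero_le_one
  rw [(hderiv 0).deriv, (hderiv 1).deriv] at h01
  simpa [c, inner_sub_left] using h01

theorem ConvexOn.lipschitzWith_one_of_resolvent (hf : ConvexOn ℝ Set.univ f)
    (hfd : Differentiable ℝ f) {lam : ℝ} (hlam : 0 ≤ lam) {J : E → E}
    (hJ : ∀ u, J u + lam • gradient f (J u) = u) : LipschitzWith 1 J := by
  refine LipschitzWith.of_dist_le_mul fun u v => ?_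
  rw [dist_eq_norm, dist_eq_norm, NNReal.coe_one, one_mul]
  set p := gradient f (J u) - gradient f (J v)
  have hsplit : u - v = (J u - J v) + lam • p := by
    linear_combination (norm := module) -(hJ u) + hJ v
  have hp : 0 ≤ ⟪J u - J v, p⟫_ℝ := by
    rw [real_inner_comm]
    exact hf.inner_gradient_sub_gradient_nonneg_s3 hfd _ _
  have hsq : ‖J u - J v‖ ^ 2 ≤ ‖u - v‖ ^ 2 := by
    rw [hsplit, norm_add_sq_real, real_inner_smul_right]
    nlinarith [mul_nonneg hlam hp, sq_nonneg ‖lam • p‖]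
  exact (pow_le_pow_iff_left₀ (norm_nonneg _) (norm_nonneg _) two_ne_zero).mp hsq

end Resolvent

theorem tendsto_of_tendsto_of_inertial {E : Type*} [NormedAddCommGroup E] [NormedSpace ℝ E]
    {x xhat : ℕ → E} {γ : ℕ → ℝ} {C : ℝ} {l : E} (hγ : ∀ k, ‖γ k‖ ≤ C)
    (hxhat : ∀ k, xhat (k + 1) = x (k + 1) + γ (k + 1) • (x (k + 1) - x k))
    (hx : Tendsto x atTop (𝓝 l)) : Tendsto xhat atTop (𝓝 l) := by
  have hx' : Tendsto (fun k => x (k + 1)) atTop (𝓝 l) := (tendsto_add_atTop_iff_nat 1).mpr hx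
  have hdiff : Tendsto (fun k => x (k + 1) - x k) atTop (𝓝 0) := by
    simpa using hx'.sub hx
  have hmomentum : Tendsto (fun k => γ (k + 1) • (x (k + 1) - x k)) atTop (𝓝 0) :=
    IsBoundedUnder.smul_tendsto_zero (isBoundedUnder_of ⟨C, fun k => hγ (k + 1)⟩) hdiff
  rw [← tendsto_add_atTop_iff_nat 1, funext hxhat]
  simpa using hx'.add hmomentum

section DavisYin

variable {E : Type*} [NormedAddCommGroup E] [InnerProductSpace ℝ E]

def davisYinStep (Jf Jg B : E → E) (lam : ℝ) (x : E) : E :=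
  x + Jg ((2 : ℝ) • Jf x - x - lam • B (Jf x)) - Jf x

theorem continuous_davisYinStep {Jf Jg B : E → E} (hJf : Continuous Jf) (hJg : Continuous Jg)
    (hB : Continuous B) (lam : ℝ) : Continuous (davisYinStep Jf Jg B lam) := by
  unfold davisYinStep
  fun_prop

theorem gradient_add_eq_zero_of_davisYinStep_eq [CompleteSpace E] {f g w : E → ℝ} {lam : ℝ}
    (hlam : lam ≠ 0) {Jf Jg : E → E}
    (hJf : ∀ u, Jf u + lam • gradient f (Jf u) = u)
    (hJg : ∀ u, Jg u + lam • gradient g (Jg u) = u) {x : E}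
    (hx : davisYinStep Jf Jg (gradient w) lam x = x) :
    gradient f (Jf x) + gradient g (Jf x) + gradient w (Jf x) = 0 := by
  set z := (2 : ℝ) • Jf x - x - lam • gradient w (Jf x)
  have hJgz : Jg z = Jf x := by
    unfold davisYinStep at hx
    linear_combination (norm := module) hx
  have hsum : lam • (gradient f (Jf x) + gradient g (Jf x) + gradient w (Jf x)) = 0 := by
    have hg' := hJg z
    rw [hJgz] at hg'
    linear_combination (norm := module) hJf x + hg'
  exact (smul_eq_zero.mp hsum).resolve_left hlam

end DavisYin

theorem stmt_3_general {n : ℕ} (f g w : EuclideanSpace ℝ (Fin n) → ℝ)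
    (hf : ConvexOn ℝ Set.univ f) (hg : ConvexOn ℝ Set.univ g)
    (hfd : Differentiable ℝ f) (hgd : Differentiable ℝ g)
    (hwc : Continuous (gradient w))
    (lam : ℝ) (hlam : 0 < lam)
    (Jf Jg : EuclideanSpace ℝ (Fin n) → EuclideanSpace ℝ (Fin n))
    (hJf : ∀ u, Jf u + lam • gradient f (Jf u) = u)
    (hJg : ∀ u, Jg u + lam • gradient g (Jg u) = u)
    (γ : ℕ → ℝ) (hγ : ∀ k, γ k ∈ Set.Icc (0 : ℝ) 1)
    (x xhat : ℕ → EuclideanSpace ℝ (Fin n))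
    (hxhat : ∀ k, xhat (k + 1) = x (k + 1) + γ (k + 1) • (x (k + 1) - x k))
    (hrec : ∀ k, x (k + 1) =
      xhat k + Jg ((2 : ℝ) • Jf (xhat k) - xhat k - lam • gradient w (Jf (xhat k)))
        - Jf (xhat k))
    (xinf : EuclideanSpace ℝ (Fin n))
    (hconv : Filter.Tendsto x Filter.atTop (nhds xinf)) :
    Filter.Tendsto (fun k => Jf (xhat k)) Filter.atTop (nhds (Jf xinf)) ∧
    gradient f (Jf xinf) + gradient g (Jf xinf) + gradient w (Jf xinf) = 0 := by
  have hJf_cont := (hf.lipschitzWith_one_of_resolvent hfd hlam.le hJf).continuous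
  have hJg_cont := (hg.lipschitzWith_one_of_resolvent hgd hlam.le hJg).continuous
  have hγ_bdd : ∀ k, ‖γ k‖ ≤ 1 := fun k => by
    rw [Real.norm_eq_abs, abs_le]
    exact ⟨by linarith [(hγ k).1], (hγ k).2⟩
  have hxhat_lim : Tendsto xhat atTop (𝓝 xinf) :=
    tendsto_of_tendsto_of_inertial hγ_bdd hxhat hconv
  refine ⟨(hJf_cont.tendsto xinf).comp hxhat_lim, ?_⟩
  have hT := continuous_davisYinStep hJf_cont hJg_cont hwc lam
  have hfix : davisYinStep Jf Jg (gradient w) lam xinf = xinf := by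
    have hstep : (fun k => x (k + 1)) = davisYinStep Jf Jg (gradient w) lam ∘ xhat := funext hrec
    refine tendsto_nhds_unique ((hT.tendsto xinf).comp hxhat_lim) ?_
    rw [← hstep]
    exact (tendsto_add_atTop_iff_nat 1).mpr hconv
  exact gradient_add_eq_zero_of_davisYinStep_eq hlam.ne' hJf hJg hfix

/-- If the iterates of the accelerated Davis-Yin method converge to `x_∞`,
then `J_f(x̂_k) → J_f(x_∞)` and `J_f(x_∞)` is a zero of `∇f + ∇g + ∇w`. -/
theorem stmt_3 {n : ℕ} (f g w : EuclideanSpace ℝ (Fin n) → ℝ)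
    (hf : ConvexOn ℝ Set.univ f) (hg : ConvexOn ℝ Set.univ g)
    (hfd : Differentiable ℝ f) (hgd : Differentiable ℝ g)
    (hwd : Differentiable ℝ w) (hwc : Continuous (gradient w))
    (lam : ℝ) (hlam : 0 < lam)
    (Jf Jg : EuclideanSpace ℝ (Fin n) → EuclideanSpace ℝ (Fin n))
    (hJf : ∀ u, Jf u + lam • gradient f (Jf u) = u)
    (hJg : ∀ u, Jg u + lam • gradient g (Jg u) = u)
    (γ : ℕ → ℝ) (hγ : ∀ k, γ k ∈ Set.Icc (0 : ℝ) 1)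
    (x xhat : ℕ → EuclideanSpace ℝ (Fin n))
    (hxhat : ∀ k, xhat (k + 1) = x (k + 1) + γ (k + 1) • (x (k + 1) - x k))
    (hrec : ∀ k, x (k + 1) =
      xhat k + Jg ((2 : ℝ) • Jf (xhat k) - xhat k - lam • gradient w (Jf (xhat k)))
        - Jf (xhat k))
    (xinf : EuclideanSpace ℝ (Fin n))
    (hconv : Filter.Tendsto x Filter.atTop (nhds xinf)) :
    Filter.Tendsto (fun k => Jf (xhat k)) Filter.atTop (nhds (Jf xinf)) ∧
    gradient f (Jf xinf) + gradient g (Jf xinf) + gradient w (Jf xinf) = 0 :=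
  stmt_3_general f g w hf hg hfd hgd hwc lam hlam Jf Jg hJf hJg γ hγ x xhat hxhat hrec xinf hconv
end

section
/- Let g : ℝⁿ → ℝ be convex and differentiable, let w : ℝⁿ → ℝ be differentiable with L-Lipschitz gradient, and let λ > 0 satisfy λL < 1. Let J_g : ℝⁿ → ℝⁿ satisfy J_g(u) + λ∇g(J_g(u)) = u for every u ∈ ℝⁿ. Let γ_k ∈ [0,1] for all k, and let sequences (x_k), (x̂_k) in ℝⁿ satisfy, for all k ≥ 0, x̂_{k+1} = x_{k+1} + γ_{k+1}(x_{k+1} − x_k) and the accelerated Tseng recursion: x_{k+1/2} = J_g( x̂_k − λ∇w(x̂_k) ) and x_{k+1} = x_{k+1/2} − λ( ∇w(x_{k+1/2}) − ∇w(x̂_k) ). If x_k → x_∞ for some x_∞ ∈ ℝⁿ, then ∇g(x_∞) + ∇w(x_∞) = 0, i.e. x_∞ is a minimizer of g + w. -/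
open Filter Topology InnerProductSpace
open scoped RealInnerProductSpace

/-! The correction step gives `‖x_{k+1/2} - x_{k+1}‖ ≤ λL/(1-λL) ‖x_{k+1} - x̂_k‖`, and
`x̂_k → x_∞` because the momentum term is a bounded multiple of `x_{k+1} - x_k → 0`; hence
`x_{k+1/2} → x_∞`. The resolvent equation then gives
`∇g(x_{k+1/2}) = (x̂_k - λ∇w(x̂_k) - x_{k+1/2}) / λ → -∇w(x_∞)`. Finally the graph of the
gradient of a differentiable convex function is closed: the subgradient inequality passes to the
limit, and the only subgradient of a differentiable function is its gradient. -/

section Gradient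

variable {E : Type*} [NormedAddCommGroup E] [InnerProductSpace ℝ E] [CompleteSpace E]
  {g : E → ℝ} {g' v x : E}

theorem ConvexOn.add_inner_le_of_hasGradientAt (hg : ConvexOn ℝ Set.univ g)
    (hgx : HasGradientAt g g' x) (z : E) : g x + ⟪g', z - x⟫_ℝ ≤ g z := by
  set φ : ℝ →ᵃ[ℝ] E := AffineMap.lineMap x z
  have hφ : ⇑φ = fun t : ℝ => t • (z - x) + x := funext (AffineMap.lineMap_apply_module' x z)
  have hgφ : HasDerivAt (g ∘ φ) ⟪g', z - x⟫_ℝ 0 := by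
    have hline : HasDerivAt (fun t : ℝ => t • (z - x) + x) (z - x) 0 := by
      simpa using ((hasDerivAt_id (0 : ℝ)).smul_const (z - x)).add_const x
    rw [hφ]
    simpa using hgx.hasFDerivAt.comp_hasDerivAt_of_eq 0 hline (by simp)
  have hslope := (hg.comp_affineMap φ).le_slope_of_hasDerivAt (Set.mem_univ 0)
    (Set.mem_univ 1) zero_lt_one hgφ
  simp only [slope_def_field, Function.comp_apply, φ, AffineMap.lineMap_apply_zero,
    AffineMap.lineMap_apply_one, sub_zero, div_one] at hslope
  linarith

theorem HasGradientAt.eq_of_forall_add_inner_le (hgx : HasGradientAt g g' x)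
    (hv : ∀ z, g x + ⟪v, z - x⟫_ℝ ≤ g z) : g' = v := by
  have hmin : IsLocalMin (fun z => g z - ⟪v, z⟫_ℝ) x :=
    Eventually.of_forall fun z => by
      have := hv z
      rw [inner_sub_right] at this
      linarith
  have hzero := congrArg (· (g' - v))
    (hmin.hasFDerivAt_eq_zero (hgx.hasFDerivAt.sub (innerSL ℝ v).hasFDerivAt))
  simp only [sub_apply, toDual_apply_apply, innerSL_apply_apply,
    zero_apply, ← inner_sub_left, inner_self_eq_zero] at hzero
  exact sub_eq_zero.1 hzero

theorem ConvexOn.gradient_eq_of_tendsto {ι : Type*} {l : Filter ι} [l.NeBot] {y : ι → E}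
    (hg : ConvexOn ℝ Set.univ g) (hgd : Differentiable ℝ g) (hy : Tendsto y l (𝓝 x))
    (hgy : Tendsto (fun i => gradient g (y i)) l (𝓝 v)) : gradient g x = v := by
  refine (hgd x).hasGradientAt.eq_of_forall_add_inner_le fun z => ?_
  have hlim : Tendsto (fun i => g (y i) + ⟪gradient g (y i), z - y i⟫_ℝ) l
      (𝓝 (g x + ⟪v, z - x⟫_ℝ)) :=
    ((hgd.continuous.tendsto x).comp hy).add (hgy.inner (tendsto_const_nhds.sub hy))
  exact le_of_tendsto' hlim fun i =>
    hg.add_inner_le_of_hasGradientAt (hgd (y i)).hasGradientAt z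

end Gradient

section ForwardBackwardForward

variable {E : Type*} [SeminormedAddCommGroup E] [NormedSpace ℝ E]

theorem norm_sub_le_of_forward_backward_forward {F : E → E} {K : NNReal} (hF : LipschitzWith K F)
    {lam : ℝ} (hlam : 0 ≤ lam) (hlamK : lam * K < 1) {x y x' : E}
    (hx' : x' = y - lam • (F y - F x)) :
    ‖y - x'‖ ≤ lam * K / (1 - lam * K) * ‖x' - x‖ := by
  have hstep : ‖y - x'‖ ≤ lam * K * (‖y - x'‖ + ‖x' - x‖) :=
    calc ‖y - x'‖ = lam * ‖F y - F x‖ := by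
          rw [hx', sub_sub_cancel, norm_smul, Real.norm_of_nonneg hlam]
      _ ≤ lam * (K * ‖y - x‖) := by gcongr; exact hF.norm_sub_le y x
      _ ≤ lam * K * (‖y - x'‖ + ‖x' - x‖) := by
          rw [← mul_assoc]; gcongr; exact norm_sub_le_norm_sub_add_norm_sub y x' x
  rw [div_mul_eq_mul_div, le_div_iff₀ (by linarith)]
  linarith

theorem tendsto_of_forward_backward_forward {F : E → E} {K : NNReal} (hF : LipschitzWith K F)
    {lam : ℝ} (hlam : 0 ≤ lam) (hlamK : lam * K < 1) {x y x' : ℕ → E} {a : E}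
    (hx : Tendsto x atTop (𝓝 a)) (hx' : Tendsto x' atTop (𝓝 a))
    (hstep : ∀ k, x' k = y k - lam • (F (y k) - F (x k))) : Tendsto y atTop (𝓝 a) := by
  have hdist : Tendsto (fun k => y k - x' k) atTop (𝓝 0) := by
    refine squeeze_zero_norm (fun k => norm_sub_le_of_forward_backward_forward hF hlam hlamK
      (hstep k)) ?_
    simpa using ((hx'.sub hx).norm).const_mul (lam * K / (1 - lam * K))
  simpa using hdist.add hx'

end ForwardBackwardForward

theorem Filter.Tendsto.add_smul_sub_of_norm_le {E : Type*} [SeminormedAddCommGroup E]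
    [NormedSpace ℝ E] {x : ℕ → E} {a : E} (hx : Tendsto x atTop (𝓝 a)) {γ : ℕ → ℝ} {C : ℝ}
    (hγ : ∀ k, ‖γ k‖ ≤ C) :
    Tendsto (fun k => x (k + 1) + γ (k + 1) • (x (k + 1) - x k)) atTop (𝓝 a) := by
  have hx1 := hx.comp (tendsto_add_atTop_nat 1)
  have hmom : Tendsto (fun k => γ (k + 1) • (x (k + 1) - x k)) atTop (𝓝 0) :=
    (isBoundedUnder_of ⟨C, fun k => hγ (k + 1)⟩).smul_tendsto_zero (by simpa using hx1.sub hx)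
  simpa using hx1.add hmom

theorem stmt_4_general {n : ℕ} (g w : EuclideanSpace ℝ (Fin n) → ℝ)
    (hg : ConvexOn ℝ Set.univ g)
    (hgd : Differentiable ℝ g)
    (L : ℝ)
    (hLip : ∀ u v : EuclideanSpace ℝ (Fin n),
      ‖gradient w u - gradient w v‖ ≤ L * ‖u - v‖)
    (lam : ℝ) (hlam : 0 < lam) (hlamL : lam * L < 1)
    (Jg : EuclideanSpace ℝ (Fin n) → EuclideanSpace ℝ (Fin n))
    (hJg : ∀ u, Jg u + lam • gradient g (Jg u) = u)
    (γ : ℕ → ℝ) (hγ : ∀ k, γ k ∈ Set.Icc (0 : ℝ) 1)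
    (x xhat : ℕ → EuclideanSpace ℝ (Fin n))
    (hxhat : ∀ k, xhat (k + 1) = x (k + 1) + γ (k + 1) • (x (k + 1) - x k))
    (hrec : ∀ k, x (k + 1) =
      Jg (xhat k - lam • gradient w (xhat k))
        - lam • (gradient w (Jg (xhat k - lam • gradient w (xhat k)))
          - gradient w (xhat k)))
    (xinf : EuclideanSpace ℝ (Fin n))
    (hconv : Filter.Tendsto x Filter.atTop (nhds xinf)) :
    gradient g xinf + gradient w xinf = 0 := by
  have hK : LipschitzWith L.toNNReal (gradient w) :=
    .of_dist_le' fun u v => by simpa only [dist_eq_norm] using hLip u v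
  have hlamK : lam * L.toNNReal < 1 := by
    rw [Real.coe_toNNReal', mul_max_of_nonneg _ _ hlam.le, mul_zero]
    exact max_lt hlamL one_pos
  have hxhat_lim : Tendsto xhat atTop (𝓝 xinf) := by
    refine (tendsto_add_atTop_iff_nat 1).1 ?_
    simpa only [hxhat] using hconv.add_smul_sub_of_norm_le (C := 1) fun k =>
      abs_le.2 ⟨by linarith [(hγ k).1], (hγ k).2⟩
  set u := fun k => xhat k - lam • gradient w (xhat k)
  have hu : Tendsto u atTop (𝓝 (xinf - lam • gradient w xinf)) :=
    hxhat_lim.sub (((hK.continuous.tendsto xinf).comp hxhat_lim).const_smul lam)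
  have hy : Tendsto (fun k => Jg (u k)) atTop (𝓝 xinf) :=
    tendsto_of_forward_backward_forward hK hlam.le hlamK hxhat_lim
      (hconv.comp (tendsto_add_atTop_nat 1)) hrec
  have hgrad : ∀ k, gradient g (Jg (u k)) = lam⁻¹ • (u k - Jg (u k)) := fun k => by
    rw [eq_inv_smul_iff₀ hlam.ne', eq_sub_iff_add_eq', hJg]
  refine add_eq_zero_iff_eq_neg.2 (hg.gradient_eq_of_tendsto hgd hy ?_)
  have hlim : lam⁻¹ • (xinf - lam • gradient w xinf - xinf) = -gradient w xinf := by
    rw [sub_sub_cancel_left, smul_neg, inv_smul_smul₀ hlam.ne']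
  simpa only [hgrad, hlim] using (hu.sub hy).const_smul lam⁻¹

/-- If the iterates of the accelerated Tseng (forward-backward-forward)
method converge to `x_∞`, then `x_∞` is a zero of `∇g + ∇w`. -/
theorem stmt_4 {n : ℕ} (g w : EuclideanSpace ℝ (Fin n) → ℝ)
    (hg : ConvexOn ℝ Set.univ g)
    (hgd : Differentiable ℝ g) (hwd : Differentiable ℝ w)
    (L : ℝ)
    (hLip : ∀ u v : EuclideanSpace ℝ (Fin n),
      ‖gradient w u - gradient w v‖ ≤ L * ‖u - v‖)
    (lam : ℝ) (hlam : 0 < lam) (hlamL : lam * L < 1)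
    (Jg : EuclideanSpace ℝ (Fin n) → EuclideanSpace ℝ (Fin n))
    (hJg : ∀ u, Jg u + lam • gradient g (Jg u) = u)
    (γ : ℕ → ℝ) (hγ : ∀ k, γ k ∈ Set.Icc (0 : ℝ) 1)
    (x xhat : ℕ → EuclideanSpace ℝ (Fin n))
    (hxhat : ∀ k, xhat (k + 1) = x (k + 1) + γ (k + 1) • (x (k + 1) - x k))
    (hrec : ∀ k, x (k + 1) =
      Jg (xhat k - lam • gradient w (xhat k))
        - lam • (gradient w (Jg (xhat k - lam • gradient w (xhat k)))
          - gradient w (xhat k)))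
    (xinf : EuclideanSpace ℝ (Fin n))
    (hconv : Filter.Tendsto x Filter.atTop (nhds xinf)) :
    gradient g xinf + gradient w xinf = 0 :=
  stmt_4_general g w hg hgd L hLip lam hlam hlamL Jg hJg γ hγ x xhat hxhat hrec xinf hconv
end

section
/- Let f, g : ℝⁿ → ℝ be convex and differentiable with continuous gradients, and let w : ℝⁿ → ℝ be differentiable with continuous gradient. Let λ > 0 and let J_f, J_g : ℝⁿ → ℝⁿ satisfy J_f(u) + λ∇f(J_f(u)) = u and J_g(u) + λ∇g(J_g(u)) = u for every u ∈ ℝⁿ. Let γ_k ∈ [0,1] for all k, and let sequences (x_k), (x̂_k), (c_k) in ℝⁿ satisfy, for all k ≥ 0, x̂_{k+1} = x_{k+1} + γ_{k+1}(x_{k+1} − x_k) and the accelerated ADMM recursion: x_{k+1/2} = J_f( x̂_k − λ∇w(x̂_k) + λc_k ), x_{k+1} = J_g( x_{k+1/2} − λc_k ), and c_{k+1} = c_k + (x_{k+1} − x_{k+1/2})/λ. If x_k → x_∞ and c_k → c_∞ for some x_∞, c_∞ ∈ ℝⁿ, then ∇g(x_∞) = −c_∞, ∇f(x_∞) + ∇w(x_∞)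 = c_∞, and hence ∇f(x_∞) + ∇g(x_∞) + ∇w(x_∞) = 0, i.e. the limit x_∞ is a minimizer of f + g + w and the discretization preserves steady states of the underlying ODE. -/
/-!
The dual update turns the backward step into the exact identity `∇g(x_{k+1}) = -c_{k+1}`, and
the forward-backward step gives `∇f(x_{k+1/2}) + ∇w(x̂_k) = c_k + (x̂_k - x_{k+1/2})/λ`.
Convergence of `c_k` forces `x_{k+1} - x_{k+1/2} = λ(c_{k+1} - c_k) → 0` and bounded momentum
forces `x̂_k - x_k → 0`, so all three sequences tend to `x_∞`; continuity of the gradients then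
passes both identities to the limit.
-/

open Filter Topology

section ResolventStep

variable {E : Type*} [AddCommGroup E] [Module ℝ E] {lam : ℝ}

theorem apply_eq_neg_of_backward_step (hlam : lam ≠ 0) {G : E → E} {y h c c' : E}
    (hy : y + lam • G y = h - lam • c) (hc : c' = c + (1 / lam) • (y - h)) :
    G y = -c' := by
  rw [← smul_right_inj hlam]
  have hc' : lam • c' = lam • c + (y - h) := by
    rw [hc, smul_add, smul_smul, mul_one_div_cancel hlam, one_smul]
  rw [smul_neg, hc', eq_sub_of_add_eq' hy]
  abel

theorem apply_add_apply_eq_of_forward_backward_step (hlam : lam ≠ 0) {F W : E → E} {y z c : E}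
    (hy : y + lam • F y = z - lam • W z + lam • c) :
    F y + W z = c + lam⁻¹ • (z - y) := by
  rw [← smul_right_inj hlam, smul_add, smul_add, smul_smul, mul_inv_cancel₀ hlam, one_smul,
    eq_sub_of_add_eq' hy]
  abel

theorem sub_eq_smul_sub_of_dual_update (hlam : lam ≠ 0) {y h c c' : E}
    (hc : c' = c + (1 / lam) • (y - h)) : y - h = lam • (c' - c) := by
  rw [hc, add_sub_cancel_left, smul_smul, mul_one_div_cancel hlam, one_smul]

end ResolventStep

theorem tendsto_succ_sub_nhds_zero {E : Type*} [TopologicalSpace E] [AddGroup E]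
    [IsTopologicalAddGroup E] {u : ℕ → E} {a : E} (hu : Tendsto u atTop (𝓝 a)) :
    Tendsto (fun k => u (k + 1) - u k) atTop (𝓝 0) := by
  simpa using ((tendsto_add_atTop_iff_nat 1).2 hu).sub hu

theorem tendsto_extrapolation {E : Type*} [NormedAddCommGroup E] [NormedSpace ℝ E]
    {u : ℕ → E} {a : E} {β : ℕ → ℝ} (hu : Tendsto u atTop (𝓝 a))
    (hβ : IsBoundedUnder (· ≤ ·) atTop (norm ∘ β)) :
    Tendsto (fun k => u (k + 1) + β k • (u (k + 1) - u k)) atTop (𝓝 a) := by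
  simpa using ((tendsto_add_atTop_iff_nat 1).2 hu).add
    (hβ.smul_tendsto_zero (tendsto_succ_sub_nhds_zero hu))

theorem stmt_5_general {n : ℕ} (f g w : EuclideanSpace ℝ (Fin n) → ℝ)
    (hfc : Continuous (gradient f)) (hgc : Continuous (gradient g))
    (hwc : Continuous (gradient w))
    (lam : ℝ) (hlam : 0 < lam)
    (Jf Jg : EuclideanSpace ℝ (Fin n) → EuclideanSpace ℝ (Fin n))
    (hJf : ∀ u, Jf u + lam • gradient f (Jf u) = u)
    (hJg : ∀ u, Jg u + lam • gradient g (Jg u) = u)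
    (γ : ℕ → ℝ) (hγ : ∀ k, γ k ∈ Set.Icc (0 : ℝ) 1)
    (x xhalf xhat c : ℕ → EuclideanSpace ℝ (Fin n))
    (hxhat : ∀ k, xhat (k + 1) = x (k + 1) + γ (k + 1) • (x (k + 1) - x k))
    (h1 : ∀ k, xhalf k = Jf (xhat k - lam • gradient w (xhat k) + lam • c k))
    (h2 : ∀ k, x (k + 1) = Jg (xhalf k - lam • c k))
    (h3 : ∀ k, c (k + 1) = c k + (1 / lam) • (x (k + 1) - xhalf k))
    (xinf cinf : EuclideanSpace ℝ (Fin n))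
    (hxconv : Filter.Tendsto x Filter.atTop (nhds xinf))
    (hcconv : Filter.Tendsto c Filter.atTop (nhds cinf)) :
    gradient g xinf = -cinf ∧
    gradient f xinf + gradient w xinf = cinf ∧
    gradient f xinf + gradient g xinf + gradient w xinf = 0 := by
  have hg_step (k : ℕ) : gradient g (x (k + 1)) = -c (k + 1) :=
    apply_eq_neg_of_backward_step hlam.ne' (h2 k ▸ hJg _) (h3 k)
  have hf_step (k : ℕ) : gradient f (xhalf k) + gradient w (xhat k) =
      c k + lam⁻¹ • (xhat k - xhalf k) :=
    apply_add_apply_eq_of_forward_backward_step hlam.ne' (h1 k ▸ hJf _)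
  have hxhalf : Tendsto xhalf atTop (𝓝 xinf) := by
    have := ((tendsto_add_atTop_iff_nat 1).2 hxconv).sub
      ((tendsto_succ_sub_nhds_zero hcconv).const_smul lam)
    simpa only [← sub_eq_smul_sub_of_dual_update hlam.ne' (h3 _), sub_sub_cancel, smul_zero,
      sub_zero] using this
  have hxhat : Tendsto xhat atTop (𝓝 xinf) := by
    have hγ_bdd : IsBoundedUnder (· ≤ ·) atTop (norm ∘ fun k => γ (k + 1)) :=
      isBoundedUnder_of ⟨1, fun k =>
        abs_le.2 ⟨by linarith [(hγ (k + 1)).1], (hγ (k + 1)).2⟩⟩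
    refine (tendsto_add_atTop_iff_nat 1).1 ?_
    simpa only [hxhat] using tendsto_extrapolation hxconv hγ_bdd
  have hG : gradient g xinf = -cinf := by
    refine tendsto_nhds_unique
      ((hgc.tendsto xinf).comp ((tendsto_add_atTop_iff_nat 1).2 hxconv)) ?_
    simpa only [Function.comp_def, hg_step] using ((tendsto_add_atTop_iff_nat 1).2 hcconv).neg
  have hF : gradient f xinf + gradient w xinf = cinf := by
    refine tendsto_nhds_unique
      (((hfc.tendsto xinf).comp hxhalf).add ((hwc.tendsto xinf).comp hxhat)) ?_
    simpa only [Function.comp_def, hf_step, sub_self, smul_zero, add_zero] using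
      hcconv.add ((hxhat.sub hxhalf).const_smul lam⁻¹)
  refine ⟨hG, hF, ?_⟩
  rw [hG, add_right_comm, hF, add_neg_cancel]

/-- If the iterates and balance coefficients of the accelerated ADMM
extension converge, then the limit is a zero of `∇f + ∇g + ∇w` with
`∇g(x_∞) = -c_∞` and `∇f(x_∞) + ∇w(x_∞) = c_∞`. -/
theorem stmt_5 {n : ℕ} (f g w : EuclideanSpace ℝ (Fin n) → ℝ)
    (hf : ConvexOn ℝ Set.univ f) (hg : ConvexOn ℝ Set.univ g)
    (hfd : Differentiable ℝ f) (hgd : Differentiable ℝ g) (hwd : Differentiable ℝ w)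
    (hfc : Continuous (gradient f)) (hgc : Continuous (gradient g))
    (hwc : Continuous (gradient w))
    (lam : ℝ) (hlam : 0 < lam)
    (Jf Jg : EuclideanSpace ℝ (Fin n) → EuclideanSpace ℝ (Fin n))
    (hJf : ∀ u, Jf u + lam • gradient f (Jf u) = u)
    (hJg : ∀ u, Jg u + lam • gradient g (Jg u) = u)
    (γ : ℕ → ℝ) (hγ : ∀ k, γ k ∈ Set.Icc (0 : ℝ) 1)
    (x xhalf xhat c : ℕ → EuclideanSpace ℝ (Fin n))
    (hxhat : ∀ k, xhat (k + 1) = x (k + 1) + γ (k + 1) • (x (k + 1) - x k))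
    (h1 : ∀ k, xhalf k = Jf (xhat k - lam • gradient w (xhat k) + lam • c k))
    (h2 : ∀ k, x (k + 1) = Jg (xhalf k - lam • c k))
    (h3 : ∀ k, c (k + 1) = c k + (1 / lam) • (x (k + 1) - xhalf k))
    (xinf cinf : EuclideanSpace ℝ (Fin n))
    (hxconv : Filter.Tendsto x Filter.atTop (nhds xinf))
    (hcconv : Filter.Tendsto c Filter.atTop (nhds cinf)) :
    gradient g xinf = -cinf ∧
    gradient f xinf + gradient w xinf = cinf ∧
    gradient f xinf + gradient g xinf + gradient w xinf = 0 :=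
  stmt_5_general f g w hfc hgc hwc lam hlam Jf Jg hJf hJg γ hγ x xhalf xhat c hxhat h1 h2 h3 xinf
    cinf hxconv hcconv
end

section
/- Let r > 0 and let f, g, w : ℝⁿ → ℝ be differentiable, with each of ∇f, ∇g, ∇w L-Lipschitz and bounded in norm by G. Let t ∈ ℝ, h₀ ∈ (0,1], V ≥ 0, and let x, v : ℝ → ℝⁿ be differentiable on [t, t+h₀] with x′(s) = v(s), v′(s) = −r v(s) − (∇f + ∇g + ∇w)(x(s)), and ‖v(s)‖ ≤ V for all s ∈ [t, t+h₀] (a solution of the accelerated gradient flow with constant damping). Then there exists a constant C > 0 such that for every h ∈ (0, h₀] the following holds: with λ := h², x̂ := x(t) + h(1 − rh)v(t), and the Davis–Yin step from x̂, namely x¼ with x¼ + λ∇f(x¼) = x̂, x½ := 2x¼ − x̂, x¾ with x¾ + λ∇g(x¾) = x½ − λ∇w(x¼), x⁺ := x̂ + x¾ − x¼, and v⁺ := (x⁺ − x(t))/h, one has ‖x(t+h) − x⁺‖ ≤ C h² and ‖v(t+h) − v⁺‖ ≤ C h². (Hence the accelerated Davis–Yin method with constant damping is a first-order integrator of the accelerated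 gradient flow ẍ + rẋ = −∇(f+g+w)(x).) -/
/-!
Eliminating the two resolvent equations shows that the Davis–Yin step is a momentum step in
disguise: `x⁺ = x̂ - h² D` with `D = ∇f(xq) + ∇g(xt) + ∇w(xq)`, hence
`v⁺ = (1 - r h) v(t) - h D`. Both `xq` and `xt` lie within `O(h)` of `x(t)`, so
`D = ∇(f + g + w)(x(t)) + O(h)` by the Lipschitz bounds. On the other hand, the acceleration of
the flow is bounded and Lipschitz in time, so `x(t + h) = x(t) + h v(t) + O(h²)` and
`v(t + h) = v(t) - h (r v(t) + ∇(f + g + w)(x(t))) + O(h²)`; comparing the two expansions gives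
both estimates.
-/

open Set
open scoped NNReal

section Taylor

variable {E : Type*} [NormedAddCommGroup E] [NormedSpace ℝ E]

theorem norm_sub_sub_smul_le_of_hasDerivWithinAt {φ φ' : ℝ → E} {a b c : ℝ} (hab : a ≤ b)
    (hc : 0 ≤ c) (hφ : ∀ s ∈ Icc a b, HasDerivWithinAt φ (φ' s) (Icc a b) s)
    (hφ' : ∀ s ∈ Icc a b, ‖φ' s - φ' a‖ ≤ c * (s - a)) :
    ‖φ b - φ a - (b - a) • φ' a‖ ≤ c * (b - a) ^ 2 := by
  have hψ : ∀ s ∈ Icc a b,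
      HasDerivWithinAt (fun s => φ s - s • φ' a) (φ' s - φ' a) (Icc a b) s := fun s hs => by
    simpa only [one_smul, id] using (hφ s hs).fun_sub ((hasDerivWithinAt_id s _).smul_const (φ' a))
  have hbound : ∀ s ∈ Ico a b, ‖φ' s - φ' a‖ ≤ c * (b - a) := fun s hs =>
    (hφ' s (Ico_subset_Icc_self hs)).trans (by gcongr; exact hs.2.le)
  calc ‖φ b - φ a - (b - a) • φ' a‖ = ‖(φ b - b • φ' a) - (φ a - a • φ' a)‖ := by
        congr 1; module
    _ ≤ c * (b - a) * (b - a) :=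
        norm_image_sub_le_of_norm_deriv_le_segment' hψ hbound b (right_mem_Icc.2 hab)
    _ = c * (b - a) ^ 2 := by ring

end Taylor

section DampedFlow

variable {E : Type*} [NormedAddCommGroup E] [NormedSpace ℝ E]
  {Φ : E → E} {x v : ℝ → E} {r V G a b : ℝ} {K : ℝ≥0}

theorem dampedFlow_norm_velocity_sub_le
    (hv : ∀ s ∈ Icc a b, HasDerivWithinAt v (-(r • v s) - Φ (x s)) (Icc a b) s)
    (hV : ∀ s ∈ Icc a b, ‖v s‖ ≤ V) (hΦ : ∀ u, ‖Φ u‖ ≤ G) :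
    ∀ s ∈ Icc a b, ‖v s - v a‖ ≤ (|r| * V + G) * (s - a) :=
  norm_image_sub_le_of_norm_deriv_le_segment' hv fun s hs =>
    calc ‖-(r • v s) - Φ (x s)‖ ≤ ‖-(r • v s)‖ + ‖Φ (x s)‖ := norm_sub_le _ _
      _ = |r| * ‖v s‖ + ‖Φ (x s)‖ := by rw [norm_neg, norm_smul, Real.norm_eq_abs]
      _ ≤ |r| * V + G := by gcongr; exacts [hV s (Ico_subset_Icc_self hs), hΦ _]

theorem dampedFlow_position_taylor (hab : a ≤ b)
    (hx : ∀ s ∈ Icc a b, HasDerivWithinAt x (v s) (Icc a b) s)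
    (hv : ∀ s ∈ Icc a b, HasDerivWithinAt v (-(r • v s) - Φ (x s)) (Icc a b) s)
    (hV : ∀ s ∈ Icc a b, ‖v s‖ ≤ V) (hΦ : ∀ u, ‖Φ u‖ ≤ G) :
    ‖x b - x a - (b - a) • v a‖ ≤ (|r| * V + G) * (b - a) ^ 2 := by
  have hV₀ : 0 ≤ V := (norm_nonneg _).trans (hV a (left_mem_Icc.2 hab))
  have hG₀ : 0 ≤ G := (norm_nonneg _).trans (hΦ 0)
  exact norm_sub_sub_smul_le_of_hasDerivWithinAt hab (by positivity) hx
    (dampedFlow_norm_velocity_sub_le hv hV hΦ)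

theorem dampedFlow_velocity_taylor (hab : a ≤ b)
    (hx : ∀ s ∈ Icc a b, HasDerivWithinAt x (v s) (Icc a b) s)
    (hv : ∀ s ∈ Icc a b, HasDerivWithinAt v (-(r • v s) - Φ (x s)) (Icc a b) s)
    (hV : ∀ s ∈ Icc a b, ‖v s‖ ≤ V) (hΦ : ∀ u, ‖Φ u‖ ≤ G) (hΦK : LipschitzWith K Φ) :
    ‖v b - v a + (b - a) • (r • v a + Φ (x a))‖ ≤
      (|r| * (|r| * V + G) + K * V) * (b - a) ^ 2 := by
  have hV₀ : 0 ≤ V := (norm_nonneg _).trans (hV a (left_mem_Icc.2 hab))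
  have hG₀ : 0 ≤ G := (norm_nonneg _).trans (hΦ 0)
  have hx_sub : ∀ s ∈ Icc a b, ‖x s - x a‖ ≤ V * (s - a) :=
    norm_image_sub_le_of_norm_deriv_le_segment' hx fun s hs => hV s (Ico_subset_Icc_self hs)
  have hv_sub := dampedFlow_norm_velocity_sub_le hv hV hΦ
  have hacc : ∀ s ∈ Icc a b, ‖(-(r • v s) - Φ (x s)) - (-(r • v a) - Φ (x a))‖ ≤
      (|r| * (|r| * V + G) + K * V) * (s - a) := fun s hs =>
    calc ‖(-(r • v s) - Φ (x s)) - (-(r • v a) - Φ (x a))‖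
        = ‖-(r • (v s - v a)) - (Φ (x s) - Φ (x a))‖ := by congr 1; module
      _ ≤ |r| * ‖v s - v a‖ + K * ‖x s - x a‖ := by
        refine (norm_sub_le _ _).trans (add_le_add (le_of_eq ?_) (hΦK.norm_sub_le _ _))
        rw [norm_neg, norm_smul, Real.norm_eq_abs]
      _ ≤ |r| * ((|r| * V + G) * (s - a)) + K * (V * (s - a)) := by
        gcongr; exacts [hv_sub s hs, hx_sub s hs]
      _ = (|r| * (|r| * V + G) + K * V) * (s - a) := by ring
  calc ‖v b - v a + (b - a) • (r • v a + Φ (x a))‖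
      = ‖v b - v a - (b - a) • (-(r • v a) - Φ (x a))‖ := by congr 1; module
    _ ≤ _ := norm_sub_sub_smul_le_of_hasDerivWithinAt hab (by positivity) hv hacc

end DampedFlow

section MomentumStep

variable {E : Type*} [NormedAddCommGroup E] [NormedSpace ℝ E]
  {Φ : E → E} {x v : ℝ → E} {r V G t h : ℝ} {K : ℝ≥0} {D : E}

theorem dampedFlow_position_sub_momentumStep_le (hh : 0 ≤ h)
    (hx : ∀ s ∈ Icc t (t + h), HasDerivWithinAt x (v s) (Icc t (t + h)) s)
    (hv : ∀ s ∈ Icc t (t + h), HasDerivWithinAt v (-(r • v s) - Φ (x s)) (Icc t (t + h)) s)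
    (hV : ∀ s ∈ Icc t (t + h), ‖v s‖ ≤ V) (hΦ : ∀ u, ‖Φ u‖ ≤ G) (hD : ‖D‖ ≤ G) :
    ‖x (t + h) - (x t + (h * (1 - r * h)) • v t - h ^ 2 • D)‖ ≤
      (2 * |r| * V + 2 * G) * h ^ 2 := by
  have htaylor := dampedFlow_position_taylor (le_add_of_nonneg_right hh) hx hv hV hΦ
  rw [add_sub_cancel_left] at htaylor
  have hvt := hV t (left_mem_Icc.2 (le_add_of_nonneg_right hh))
  calc ‖x (t + h) - (x t + (h * (1 - r * h)) • v t - h ^ 2 • D)‖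
      = ‖(x (t + h) - x t - h • v t) + (r * h ^ 2) • v t + h ^ 2 • D‖ := by congr 1; module
    _ ≤ ‖x (t + h) - x t - h • v t‖ + |r| * h ^ 2 * ‖v t‖ + h ^ 2 * ‖D‖ := by
      refine norm_add₃_le.trans (le_of_eq ?_)
      rw [norm_smul, norm_smul, Real.norm_eq_abs, Real.norm_eq_abs, abs_mul, abs_sq]
    _ ≤ (|r| * V + G) * h ^ 2 + |r| * h ^ 2 * V + h ^ 2 * G := by gcongr
    _ = (2 * |r| * V + 2 * G) * h ^ 2 := by ring

theorem dampedFlow_velocity_sub_momentumStep_le (hh : 0 < h)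
    (hx : ∀ s ∈ Icc t (t + h), HasDerivWithinAt x (v s) (Icc t (t + h)) s)
    (hv : ∀ s ∈ Icc t (t + h), HasDerivWithinAt v (-(r • v s) - Φ (x s)) (Icc t (t + h)) s)
    (hV : ∀ s ∈ Icc t (t + h), ‖v s‖ ≤ V) (hΦ : ∀ u, ‖Φ u‖ ≤ G) (hΦK : LipschitzWith K Φ) :
    ‖v (t + h) - (1 / h) • (x t + (h * (1 - r * h)) • v t - h ^ 2 • D - x t)‖ ≤
      (|r| * (|r| * V + G) + K * V) * h ^ 2 + h * ‖D - Φ (x t)‖ := by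
  have htaylor := dampedFlow_velocity_taylor (le_add_of_nonneg_right hh.le) hx hv hV hΦ hΦK
  rw [add_sub_cancel_left] at htaylor
  calc ‖v (t + h) - (1 / h) • (x t + (h * (1 - r * h)) • v t - h ^ 2 • D - x t)‖
      = ‖(v (t + h) - v t + h • (r • v t + Φ (x t))) + h • (D - Φ (x t))‖ := by
        congr 1
        match_scalars <;> field_simp <;> ring
    _ ≤ ‖v (t + h) - v t + h • (r • v t + Φ (x t))‖ + h * ‖D - Φ (x t)‖ := by
        refine (norm_add_le _ _).trans (le_of_eq ?_)
        rw [norm_smul, Real.norm_of_nonneg hh.le]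
    _ ≤ _ := by gcongr

end MomentumStep

section DavisYin

variable {E : Type*} {A B C : E → E} {τ : ℝ} {z xq xt : E}

theorem davisYin_sub_eq [AddCommGroup E] [Module ℝ E] (hq : xq + τ • A xq = z)
    (ht : xt + τ • B xt = (2 : ℝ) • xq - z - τ • C xq) :
    xt - xq = -(τ • (A xq + B xt + C xq)) := by
  subst hq
  linear_combination (norm := module) ht

variable [NormedAddCommGroup E] [NormedSpace ℝ E] {K : ℝ≥0} {G : ℝ}

theorem norm_davisYin_drift_sub_le (hA : LipschitzWith K A) (hB : LipschitzWith K B)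
    (hC : LipschitzWith K C) (hAG : ∀ u, ‖A u‖ ≤ G) (hBG : ∀ u, ‖B u‖ ≤ G)
    (hCG : ∀ u, ‖C u‖ ≤ G) (hτ : 0 ≤ τ) (hq : xq + τ • A xq = z)
    (ht : xt + τ • B xt = (2 : ℝ) • xq - z - τ • C xq) (y : E) :
    ‖(A xq + B xt + C xq) - (A y + B y + C y)‖ ≤ K * (3 * ‖z - y‖ + 6 * τ * G) := by
  have hsmul : ∀ u : E, ‖τ • u‖ = τ * ‖u‖ := fun u => by rw [norm_smul, Real.norm_of_nonneg hτ]
  have hq_sub : ‖xq - z‖ ≤ τ * G := by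
    rw [← hq, sub_add_cancel_left, norm_neg, hsmul]; exact mul_le_mul_of_nonneg_left (hAG xq) hτ
  have ht_sub : ‖xt - xq‖ ≤ τ * (3 * G) := by
    rw [davisYin_sub_eq hq ht, norm_neg, hsmul]
    refine mul_le_mul_of_nonneg_left (norm_add₃_le.trans ?_) hτ
    linarith [hAG xq, hBG xt, hCG xq]
  have hq_y : ‖xq - y‖ ≤ τ * G + ‖z - y‖ :=
    (norm_sub_le_norm_sub_add_norm_sub _ _ _).trans (by gcongr)
  have ht_y : ‖xt - y‖ ≤ τ * (3 * G) + (τ * G + ‖z - y‖) :=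
    (norm_sub_le_norm_sub_add_norm_sub _ _ _).trans (by gcongr)
  calc ‖(A xq + B xt + C xq) - (A y + B y + C y)‖
      = ‖(A xq - A y) + (B xt - B y) + (C xq - C y)‖ := by congr 1; abel
    _ ≤ K * ‖xq - y‖ + K * ‖xt - y‖ + K * ‖xq - y‖ :=
        norm_add₃_le.trans (by gcongr <;> apply LipschitzWith.norm_sub_le <;> assumption)
    _ ≤ K * (τ * G + ‖z - y‖) + K * (τ * (3 * G) + (τ * G + ‖z - y‖)) +
          K * (τ * G + ‖z - y‖) := by gcongr
    _ = K * (3 * ‖z - y‖ + 6 * τ * G) := by ring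

end DavisYin

section DavisYinConsistency

variable {E : Type*} [NormedAddCommGroup E] [NormedSpace ℝ E] {A B C : E → E} {K : ℝ≥0}
  {G r V t h : ℝ} {x v : ℝ → E} {xq xt : E}

theorem norm_mul_one_sub_mul_smul_le (hh : 0 ≤ h) (hh1 : h ≤ 1) (y : E) :
    ‖(h * (1 - r * h)) • y‖ ≤ h * (1 + |r|) * ‖y‖ := by
  rw [norm_smul, Real.norm_eq_abs, abs_mul, abs_of_nonneg hh]
  have : |1 - r * h| ≤ 1 + |r| :=
    calc |1 - r * h| ≤ |1| + |r * h| := abs_sub _ _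
      _ ≤ 1 + |r| := by
        rw [abs_one, abs_mul, abs_of_nonneg hh]
        nlinarith [abs_nonneg r]
  gcongr

theorem davisYin_step_error (hA : LipschitzWith K A) (hB : LipschitzWith K B)
    (hC : LipschitzWith K C) (hAG : ∀ u, ‖A u‖ ≤ G) (hBG : ∀ u, ‖B u‖ ≤ G)
    (hCG : ∀ u, ‖C u‖ ≤ G) (hh : 0 < h) (hh1 : h ≤ 1)
    (hx : ∀ s ∈ Icc t (t + h), HasDerivWithinAt x (v s) (Icc t (t + h)) s)
    (hv : ∀ s ∈ Icc t (t + h), HasDerivWithinAt v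
      (-(r • v s) - (A (x s) + B (x s) + C (x s))) (Icc t (t + h)) s)
    (hV : ∀ s ∈ Icc t (t + h), ‖v s‖ ≤ V)
    (hq : xq + h ^ 2 • A xq = x t + (h * (1 - r * h)) • v t)
    (ht : xt + h ^ 2 • B xt = (2 : ℝ) • xq - (x t + (h * (1 - r * h)) • v t) - h ^ 2 • C xq) :
    ‖x (t + h) - (x t + (h * (1 - r * h)) • v t + xt - xq)‖ ≤ (2 * |r| * V + 6 * G) * h ^ 2 ∧
    ‖v (t + h) - (1 / h) • (x t + (h * (1 - r * h)) • v t + xt - xq - x t)‖ ≤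
      (|r| * (|r| * V + 3 * G) + 3 * K * V + 3 * K * ((1 + |r|) * V + 2 * G)) * h ^ 2 := by
  have hstep : x t + (h * (1 - r * h)) • v t + xt - xq =
      x t + (h * (1 - r * h)) • v t - h ^ 2 • (A xq + B xt + C xq) := by
    rw [add_sub_assoc, davisYin_sub_eq hq ht, ← sub_eq_add_neg]
  have hΦ : ∀ u, ‖A u + B u + C u‖ ≤ 3 * G := fun u =>
    norm_add₃_le.trans (by linarith [hAG u, hBG u, hCG u])
  have hD : ‖A xq + B xt + C xq‖ ≤ 3 * G :=
    norm_add₃_le.trans (by linarith [hAG xq, hBG xt, hCG xq])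
  have hΦK : LipschitzWith (3 * K) fun u => A u + B u + C u := by
    simpa only [show K + K + K = 3 * K by ring] using (hA.add hB).add hC
  have hdrift : ‖A xq + B xt + C xq - (A (x t) + B (x t) + C (x t))‖ ≤
      3 * K * ((1 + |r|) * V + 2 * G) * h := by
    have hvt := hV t (left_mem_Icc.2 (le_add_of_nonneg_right hh.le))
    have hG₀ : 0 ≤ G := (norm_nonneg _).trans (hAG 0)
    calc _ ≤ K * (3 * ‖x t + (h * (1 - r * h)) • v t - x t‖ + 6 * h ^ 2 * G) :=
          norm_davisYin_drift_sub_le hA hB hC hAG hBG hCG (sq_nonneg h) hq ht (x t)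
      _ ≤ K * (3 * (h * (1 + |r|) * V) + 6 * h * G) := by
          rw [add_sub_cancel_left]
          gcongr
          · exact (norm_mul_one_sub_mul_smul_le hh.le hh1 _).trans (by gcongr)
          · nlinarith
      _ = 3 * K * ((1 + |r|) * V + 2 * G) * h := by ring
  rw [hstep]
  refine ⟨(dampedFlow_position_sub_momentumStep_le hh.le hx hv hV hΦ hD).trans (le_of_eq (by ring)), ?_⟩
  calc _ ≤ (|r| * (|r| * V + 3 * G) + ↑(3 * K) * V) * h ^ 2 +
        h * ‖A xq + B xt + C xq - (A (x t) + B (x t) + C (x t))‖ :=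
        dampedFlow_velocity_sub_momentumStep_le hh hx hv hV hΦ hΦK
    _ ≤ (|r| * (|r| * V + 3 * G) + 3 * K * V) * h ^ 2 +
        h * (3 * K * ((1 + |r|) * V + 2 * G) * h) := by push_cast; gcongr
    _ = _ := by ring

end DavisYinConsistency

theorem stmt_12_general {n : ℕ} (r : ℝ)
    (f g w : EuclideanSpace ℝ (Fin n) → ℝ)
    (L G : ℝ)
    (hfL : ∀ u v : EuclideanSpace ℝ (Fin n), ‖gradient f u - gradient f v‖ ≤ L * ‖u - v‖)
    (hgL : ∀ u v : EuclideanSpace ℝ (Fin n), ‖gradient g u - gradient g v‖ ≤ L * ‖u - v‖)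
    (hwL : ∀ u v : EuclideanSpace ℝ (Fin n), ‖gradient w u - gradient w v‖ ≤ L * ‖u - v‖)
    (hfG : ∀ u, ‖gradient f u‖ ≤ G)
    (hgG : ∀ u, ‖gradient g u‖ ≤ G)
    (hwG : ∀ u, ‖gradient w u‖ ≤ G)
    (t : ℝ) (h₀ : ℝ) (hh₀ : h₀ ∈ Set.Ioc (0 : ℝ) 1) (V : ℝ) (hV : 0 ≤ V)
    (x v : ℝ → EuclideanSpace ℝ (Fin n))
    (hx : ∀ s ∈ Set.Icc t (t + h₀),
      HasDerivWithinAt x (v s) (Set.Icc t (t + h₀)) s)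
    (hv : ∀ s ∈ Set.Icc t (t + h₀), HasDerivWithinAt v
      (-(r • v s) - (gradient f (x s) + gradient g (x s) + gradient w (x s)))
      (Set.Icc t (t + h₀)) s)
    (hVb : ∀ s ∈ Set.Icc t (t + h₀), ‖v s‖ ≤ V) :
    ∃ C > 0, ∀ h : ℝ, 0 < h → h ≤ h₀ →
      ∀ xq xt : EuclideanSpace ℝ (Fin n),
        xq + (h ^ 2) • gradient f xq = x t + (h * (1 - r * h)) • v t →
        xt + (h ^ 2) • gradient g xt =
          (((2 : ℝ) • xq - (x t + (h * (1 - r * h)) • v t)) - (h ^ 2) • gradient w xq) →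
        ‖x (t + h) - ((x t + (h * (1 - r * h)) • v t) + xt - xq)‖ ≤ C * h ^ 2 ∧
        ‖v (t + h) - (1 / h) • ((((x t + (h * (1 - r * h)) • v t) + xt - xq)) - x t)‖
          ≤ C * h ^ 2 := by
  have hlip : ∀ φ : EuclideanSpace ℝ (Fin n) → ℝ,
      (∀ u v, ‖gradient φ u - gradient φ v‖ ≤ L * ‖u - v‖) →
        LipschitzWith L.toNNReal (gradient φ) := fun φ hφ =>
    LipschitzWith.of_dist_le_mul fun u v => by
      simpa only [dist_eq_norm, Real.coe_toNNReal'] using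
        (hφ u v).trans (by gcongr; exact le_max_left _ _)
  lift G to ℝ≥0 using (norm_nonneg _).trans (hfG 0)
  lift V to ℝ≥0 using hV
  set K := L.toNNReal
  refine ⟨(2 * |r| * V + 6 * G) +
      (|r| * (|r| * V + 3 * G) + 3 * K * V + 3 * K * ((1 + |r|) * V + 2 * G)) + 1,
    by positivity, fun h hh hhh₀ xq xt hq ht => ?_⟩
  have hsub : Icc t (t + h) ⊆ Icc t (t + h₀) := Icc_subset_Icc_right (by linarith)
  obtain ⟨hpos, hvel⟩ := davisYin_step_error (hlip f hfL) (hlip g hgL) (hlip w hwL)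
    hfG hgG hwG hh (hhh₀.trans hh₀.2) (fun s hs => (hx s (hsub hs)).mono hsub)
    (fun s hs => (hv s (hsub hs)).mono hsub) (fun s hs => hVb s (hsub hs)) hq ht
  refine ⟨hpos.trans ?_, hvel.trans ?_⟩ <;> gcongr ?_ * _
  · linarith [show 0 ≤ |r| * (|r| * V + 3 * G) + 3 * K * V + 3 * K * ((1 + |r|) * V + 2 * G)
      by positivity]
  · linarith [show 0 ≤ 2 * |r| * V + 6 * G by positivity]

/-- The accelerated Davis-Yin method with constant damping `r` is a
first-order integrator of the accelerated gradient flow `ẍ + rẋ = -∇(f+g+w)(x)`. -/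
theorem stmt_12 {n : ℕ} (r : ℝ) (hr : 0 < r)
    (f g w : EuclideanSpace ℝ (Fin n) → ℝ)
    (hfd : Differentiable ℝ f) (hgd : Differentiable ℝ g) (hwd : Differentiable ℝ w)
    (L G : ℝ)
    (hfL : ∀ u v : EuclideanSpace ℝ (Fin n), ‖gradient f u - gradient f v‖ ≤ L * ‖u - v‖)
    (hgL : ∀ u v : EuclideanSpace ℝ (Fin n), ‖gradient g u - gradient g v‖ ≤ L * ‖u - v‖)
    (hwL : ∀ u v : EuclideanSpace ℝ (Fin n), ‖gradient w u - gradient w v‖ ≤ L * ‖u - v‖)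
    (hfG : ∀ u, ‖gradient f u‖ ≤ G)
    (hgG : ∀ u, ‖gradient g u‖ ≤ G)
    (hwG : ∀ u, ‖gradient w u‖ ≤ G)
    (t : ℝ) (h₀ : ℝ) (hh₀ : h₀ ∈ Set.Ioc (0 : ℝ) 1) (V : ℝ) (hV : 0 ≤ V)
    (x v : ℝ → EuclideanSpace ℝ (Fin n))
    (hx : ∀ s ∈ Set.Icc t (t + h₀),
      HasDerivWithinAt x (v s) (Set.Icc t (t + h₀)) s)
    (hv : ∀ s ∈ Set.Icc t (t + h₀), HasDerivWithinAt v
      (-(r • v s) - (gradient f (x s) + gradient g (x s) + gradient w (x s)))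
      (Set.Icc t (t + h₀)) s)
    (hVb : ∀ s ∈ Set.Icc t (t + h₀), ‖v s‖ ≤ V) :
    ∃ C > 0, ∀ h : ℝ, 0 < h → h ≤ h₀ →
      ∀ xq xt : EuclideanSpace ℝ (Fin n),
        xq + (h ^ 2) • gradient f xq = x t + (h * (1 - r * h)) • v t →
        xt + (h ^ 2) • gradient g xt =
          (((2 : ℝ) • xq - (x t + (h * (1 - r * h)) • v t)) - (h ^ 2) • gradient w xq) →
        ‖x (t + h) - ((x t + (h * (1 - r * h)) • v t) + xt - xq)‖ ≤ C * h ^ 2 ∧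
        ‖v (t + h) - (1 / h) • ((((x t + (h * (1 - r * h)) • v t) + xt - xq)) - x t)‖
          ≤ C * h ^ 2 :=
  stmt_12_general r f g w L G hfL hgL hwL hfG hgG hwG t h₀ hh₀ V hV x v hx hv hVb
end

section
/- Let r > 0 and let f, g, w : ℝⁿ → ℝ be differentiable, with each of ∇f, ∇g, ∇w L-Lipschitz and bounded in norm by G. Let c ∈ ℝⁿ, t ∈ ℝ, h₀ ∈ (0,1], V ≥ 0, and let x, v : ℝ → ℝⁿ be differentiable on [t, t+h₀] with x′(s) = v(s), v′(s) = −r v(s) − (∇f + ∇g + ∇w)(x(s)), and ‖v(s)‖ ≤ V for all s ∈ [t, t+h₀] (a solution of the accelerated gradient flow with constant damping). Then there exists a constant C > 0 such that for every h ∈ (0, h₀] the following holds: with λ := h², x̂ := x(t) + h(1 − rh)v(t), the ADMM step from x̂ with balance coefficient c, namely x½ with x½ + λ∇f(x½) = x̂ − λ∇w(x̂) + λc and x⁺ with x⁺ + λ∇g(x⁺) = x½ − λc, and v⁺ := (x⁺ − x(t))/h, one has ‖x(t+h) − x⁺‖ ≤ C h² and ‖v(t+h) − v⁺‖ ≤ C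 h². (Hence the accelerated ADMM extension with constant damping is a first-order integrator of the accelerated gradient flow ẍ + rẋ = −∇(f+g+w)(x).) -/
/-! Eliminating `x½` turns the step into `x⁺ = x̂ - h² P` with `P = ∇f(x½) + ∇g(x⁺) + ∇w(x̂)`.
Since `P` is bounded and the flow has bounded acceleration, both `x(t+h)` and `x⁺` equal
`x(t) + h v(t) + O(h²)`. For the velocities, `(x⁺ - x(t))/h = (1 - rh) v(t) - h P`, while
`v(t+h) = (1 - rh) v(t) - h ∇(f+g+w)(x(t)) + O(h²)` because the acceleration is Lipschitz along
the trajectory. As `x½`, `x⁺` and `x̂` all lie within `O(h)` of `x(t)`, Lipschitz continuity of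
the gradients gives `P = ∇(f+g+w)(x(t)) + O(h)`. -/

open Set NNReal

theorem lipschitzWith_toNNReal_of_norm_sub_le {α β : Type*} [SeminormedAddCommGroup α]
    [SeminormedAddCommGroup β] {T : α → β} {L : ℝ} (hT : ∀ u u', ‖T u - T u'‖ ≤ L * ‖u - u'‖) :
    LipschitzWith L.toNNReal T :=
  LipschitzWith.of_dist_le' fun u u' ↦ by simpa only [dist_eq_norm] using hT u u'

variable {E : Type*} [NormedAddCommGroup E] [NormedSpace ℝ E]

theorem norm_momentum_smul_le {r h V : ℝ} {u : E} (hh : 0 ≤ h) (hh1 : h ≤ 1) (hu : ‖u‖ ≤ V) :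
    ‖(h * (1 - r * h)) • u‖ ≤ (1 + |r|) * V * h := by
  have hrh : |1 - r * h| ≤ 1 + |r| :=
    calc |1 - r * h| ≤ 1 + |r| * h := by
          simpa [abs_mul, abs_of_nonneg hh] using abs_sub (1 : ℝ) (r * h)
      _ ≤ 1 + |r| := by gcongr; exact mul_le_of_le_one_right (abs_nonneg r) hh1
  rw [norm_smul, Real.norm_eq_abs, abs_mul, abs_of_nonneg hh]
  calc h * |1 - r * h| * ‖u‖ ≤ h * (1 + |r|) * V := by gcongr
    _ = (1 + |r|) * V * h := by ring

theorem norm_sub_sub_smul_le_of_hasDerivWithinAt_s13 {y y' : ℝ → E} {a h K : ℝ} (hh : 0 ≤ h)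
    (hy : ∀ s ∈ Icc a (a + h), HasDerivWithinAt y (y' s) (Icc a (a + h)) s)
    (hK : ∀ s ∈ Icc a (a + h), ‖y' s - y' a‖ ≤ K) :
    ‖y (a + h) - y a - h • y' a‖ ≤ K * h := by
  have hz : ∀ s ∈ Icc a (a + h),
      HasDerivWithinAt (fun s ↦ y s - s • y' a) (y' s - y' a) (Icc a (a + h)) s := fun s hs ↦
    (hy s hs).sub (by simpa using (hasDerivWithinAt_id s _).smul_const (y' a))
  have := norm_image_sub_le_of_norm_deriv_le_segment' hz (fun s hs ↦ hK s (Ico_subset_Icc_self hs))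
    (a + h) (right_mem_Icc.2 (by linarith))
  convert this using 2
  · module
  · ring

section AcceleratedFlow

variable {x v : ℝ → E} {F : E → E} {r t h V B : ℝ} {K : ℝ≥0}

theorem accelFlow_norm_vel_sub_le
    (hv : ∀ s ∈ Icc t (t + h), HasDerivWithinAt v (-(r • v s) - F (x s)) (Icc t (t + h)) s)
    (hV : ∀ s ∈ Icc t (t + h), ‖v s‖ ≤ V) (hB : ∀ u, ‖F u‖ ≤ B) :
    ∀ s ∈ Icc t (t + h), ‖v s - v t‖ ≤ (|r| * V + B) * (s - t) := by
  refine norm_image_sub_le_of_norm_deriv_le_segment' hv fun s hs ↦ ?_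
  calc ‖-(r • v s) - F (x s)‖ ≤ |r| * ‖v s‖ + ‖F (x s)‖ := by
        simpa [norm_smul] using norm_sub_le (-(r • v s)) (F (x s))
    _ ≤ |r| * V + B := by gcongr; exacts [hV s (Ico_subset_Icc_self hs), hB _]

theorem accelFlow_taylor_pos (hh : 0 ≤ h)
    (hx : ∀ s ∈ Icc t (t + h), HasDerivWithinAt x (v s) (Icc t (t + h)) s)
    (hv : ∀ s ∈ Icc t (t + h), HasDerivWithinAt v (-(r • v s) - F (x s)) (Icc t (t + h)) s)
    (hV : ∀ s ∈ Icc t (t + h), ‖v s‖ ≤ V) (hB : ∀ u, ‖F u‖ ≤ B) :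
    ‖x (t + h) - x t - h • v t‖ ≤ (|r| * V + B) * h * h := by
  refine norm_sub_sub_smul_le_of_hasDerivWithinAt_s13 hh hx fun s hs ↦ ?_
  have hV0 : 0 ≤ V := (norm_nonneg _).trans (hV s hs)
  have hB0 : 0 ≤ B := (norm_nonneg _).trans (hB 0)
  calc ‖v s - v t‖ ≤ (|r| * V + B) * (s - t) := accelFlow_norm_vel_sub_le hv hV hB s hs
    _ ≤ (|r| * V + B) * h := by gcongr; linarith [hs.2]

theorem accelFlow_taylor_vel (hh : 0 ≤ h)
    (hx : ∀ s ∈ Icc t (t + h), HasDerivWithinAt x (v s) (Icc t (t + h)) s)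
    (hv : ∀ s ∈ Icc t (t + h), HasDerivWithinAt v (-(r • v s) - F (x s)) (Icc t (t + h)) s)
    (hV : ∀ s ∈ Icc t (t + h), ‖v s‖ ≤ V) (hB : ∀ u, ‖F u‖ ≤ B) (hF : LipschitzWith K F) :
    ‖v (t + h) - v t - h • (-(r • v t) - F (x t))‖ ≤ (|r| * (|r| * V + B) + K * V) * h * h := by
  refine norm_sub_sub_smul_le_of_hasDerivWithinAt_s13 hh hv fun s hs ↦ ?_
  have hst : s - t ≤ h := by linarith [hs.2]
  have hxs : ‖x s - x t‖ ≤ V * (s - t) :=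
    norm_image_sub_le_of_norm_deriv_le_segment' hx
      (fun u hu ↦ hV u (Ico_subset_Icc_self hu)) s hs
  calc ‖(-(r • v s) - F (x s)) - (-(r • v t) - F (x t))‖
      = ‖-(r • (v s - v t)) - (F (x s) - F (x t))‖ := by congr 1; module
    _ ≤ |r| * ‖v s - v t‖ + K * ‖x s - x t‖ := by
        refine (norm_sub_le _ _).trans ?_
        rw [norm_neg, norm_smul, Real.norm_eq_abs]
        gcongr
        exact hF.norm_sub_le _ _
    _ ≤ |r| * ((|r| * V + B) * (s - t)) + K * (V * (s - t)) := by
        gcongr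
        exact accelFlow_norm_vel_sub_le hv hV hB s hs
    _ = (|r| * (|r| * V + B) + K * V) * (s - t) := by ring
    _ ≤ (|r| * (|r| * V + B) + K * V) * h := by
        have hV0 : 0 ≤ V := (norm_nonneg _).trans (hV s hs)
        have hB0 : 0 ≤ B := (norm_nonneg _).trans (hB 0)
        gcongr

theorem accelFlow_momentum_step_error_le {D : ℝ} {P xp : E} (hh : 0 < h)
    (hx : ∀ s ∈ Icc t (t + h), HasDerivWithinAt x (v s) (Icc t (t + h)) s)
    (hv : ∀ s ∈ Icc t (t + h), HasDerivWithinAt v (-(r • v s) - F (x s)) (Icc t (t + h)) s)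
    (hV : ∀ s ∈ Icc t (t + h), ‖v s‖ ≤ V) (hB : ∀ u, ‖F u‖ ≤ B) (hF : LipschitzWith K F)
    (hP : ‖P‖ ≤ B) (hPF : ‖P - F (x t)‖ ≤ D * h)
    (hxp : xp = x t + (h * (1 - r * h)) • v t - h ^ 2 • P) :
    ‖x (t + h) - xp‖ ≤ 2 * (|r| * V + B) * h ^ 2 ∧
      ‖v (t + h) - (1 / h) • (xp - x t)‖ ≤ (|r| * (|r| * V + B) + K * V + D) * h ^ 2 := by
  have hvt : ‖v t‖ ≤ V := hV t (left_mem_Icc.2 (by linarith))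
  constructor
  · calc ‖x (t + h) - xp‖ = ‖(x (t + h) - x t - h • v t) + h ^ 2 • (r • v t + P)‖ := by
          rw [hxp]; congr 1; module
      _ ≤ (|r| * V + B) * h * h + h ^ 2 * (|r| * V + B) := by
          refine (norm_add_le _ _).trans (add_le_add (accelFlow_taylor_pos hh.le hx hv hV hB) ?_)
          rw [norm_smul, Real.norm_of_nonneg (by positivity)]
          gcongr
          refine (norm_add_le _ _).trans ?_
          rw [norm_smul, Real.norm_eq_abs]
          gcongr
      _ = 2 * (|r| * V + B) * h ^ 2 := by ring
  · calc ‖v (t + h) - (1 / h) • (xp - x t)‖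
        = ‖(v (t + h) - v t - h • (-(r • v t) - F (x t))) + h • (P - F (x t))‖ := by
          rw [hxp]; congr 1
          match_scalars <;> field_simp <;> ring
      _ ≤ (|r| * (|r| * V + B) + K * V) * h * h + h * (D * h) := by
          refine (norm_add_le _ _).trans
            (add_le_add (accelFlow_taylor_vel hh.le hx hv hV hB hF) ?_)
          rw [norm_smul, Real.norm_of_nonneg hh.le]
          gcongr
      _ = (|r| * (|r| * V + B) + K * V + D) * h ^ 2 := by ring

end AcceleratedFlow

section ADMM

variable {Tf Tg Tw : E → E} {G μ : ℝ} {c xhat xh xp : E}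

theorem admm_half_step_eq (e1 : xh + μ • Tf xh = xhat - μ • Tw xhat + μ • c) :
    xh = xhat - μ • (Tf xh + Tw xhat - c) := by
  rw [← eq_sub_iff_add_eq] at e1
  exact e1.trans (by module)

theorem admm_step_eq (e1 : xh + μ • Tf xh = xhat - μ • Tw xhat + μ • c)
    (e2 : xp + μ • Tg xp = xh - μ • c) : xp = xhat - μ • (Tf xh + Tg xp + Tw xhat) := by
  rw [← eq_sub_iff_add_eq] at e2
  refine e2.trans ?_
  conv_lhs => rw [admm_half_step_eq e1]
  module

theorem admm_norm_sum_sub_le {K : ℝ≥0} {R h : ℝ} {y : E} (hh : 0 ≤ h) (hh1 : h ≤ 1)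
    (hf : LipschitzWith K Tf) (hg : LipschitzWith K Tg) (hw : LipschitzWith K Tw)
    (hfG : ∀ u, ‖Tf u‖ ≤ G) (hgG : ∀ u, ‖Tg u‖ ≤ G) (hwG : ∀ u, ‖Tw u‖ ≤ G)
    (e1 : xh + h ^ 2 • Tf xh = xhat - h ^ 2 • Tw xhat + h ^ 2 • c)
    (e2 : xp + h ^ 2 • Tg xp = xh - h ^ 2 • c) (hxhat : ‖xhat - y‖ ≤ R * h) :
    ‖(Tf xh + Tg xp + Tw xhat) - (Tf y + Tg y + Tw y)‖ ≤ 3 * K * (R + 3 * G + ‖c‖) * h := by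
  have hG : 0 ≤ G := (norm_nonneg _).trans (hfG 0)
  have hh2 : h ^ 2 ≤ h := by nlinarith
  have near : ∀ z : E, ‖z‖ ≤ 3 * G + ‖c‖ → ‖xhat - h ^ 2 • z - y‖ ≤ (R + 3 * G + ‖c‖) * h := by
    intro z hz
    calc ‖xhat - h ^ 2 • z - y‖ ≤ ‖xhat - y‖ + h ^ 2 * ‖z‖ := by
          rw [← norm_smul_of_nonneg (sq_nonneg h), sub_right_comm]; exact norm_sub_le _ _
      _ ≤ R * h + h * (3 * G + ‖c‖) := by gcongr
      _ = (R + 3 * G + ‖c‖) * h := by ring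
  have hxh : ‖xh - y‖ ≤ (R + 3 * G + ‖c‖) * h := by
    rw [admm_half_step_eq e1]
    refine near _ ((norm_sub_le _ _).trans ?_)
    linarith [norm_add_le (Tf xh) (Tw xhat), hfG xh, hwG xhat]
  have hxp : ‖xp - y‖ ≤ (R + 3 * G + ‖c‖) * h := by
    rw [admm_step_eq e1 e2]
    refine near _ ((norm_add_le _ _).trans ?_)
    linarith [norm_add_le (Tf xh) (Tg xp), hfG xh, hgG xp, hwG xhat, norm_nonneg c]
  have hxhat' : ‖xhat - y‖ ≤ (R + 3 * G + ‖c‖) * h := by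
    simpa using near 0 (by rw [norm_zero]; linarith [norm_nonneg c])
  calc ‖(Tf xh + Tg xp + Tw xhat) - (Tf y + Tg y + Tw y)‖
      = ‖(Tf xh - Tf y) + (Tg xp - Tg y) + (Tw xhat - Tw y)‖ := by congr 1; abel
    _ ≤ K * ‖xh - y‖ + K * ‖xp - y‖ + K * ‖xhat - y‖ :=
        (norm_add₃_le).trans (add_le_add_three (hf.norm_sub_le _ _) (hg.norm_sub_le _ _)
          (hw.norm_sub_le _ _))
    _ ≤ K * ((R + 3 * G + ‖c‖) * h) + K * ((R + 3 * G + ‖c‖) * h)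
        + K * ((R + 3 * G + ‖c‖) * h) := by gcongr
    _ = 3 * K * (R + 3 * G + ‖c‖) * h := by ring

end ADMM

theorem stmt_13_general {n : ℕ} (r : ℝ)
    (f g w : EuclideanSpace ℝ (Fin n) → ℝ)
    (L G : ℝ)
    (hfL : ∀ u v : EuclideanSpace ℝ (Fin n), ‖gradient f u - gradient f v‖ ≤ L * ‖u - v‖)
    (hgL : ∀ u v : EuclideanSpace ℝ (Fin n), ‖gradient g u - gradient g v‖ ≤ L * ‖u - v‖)
    (hwL : ∀ u v : EuclideanSpace ℝ (Fin n), ‖gradient w u - gradient w v‖ ≤ L * ‖u - v‖)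
    (hfG : ∀ u, ‖gradient f u‖ ≤ G)
    (hgG : ∀ u, ‖gradient g u‖ ≤ G)
    (hwG : ∀ u, ‖gradient w u‖ ≤ G)
    (c : EuclideanSpace ℝ (Fin n))
    (t : ℝ) (h₀ : ℝ) (hh₀ : h₀ ∈ Set.Ioc (0 : ℝ) 1) (V : ℝ)
    (x v : ℝ → EuclideanSpace ℝ (Fin n))
    (hx : ∀ s ∈ Set.Icc t (t + h₀),
      HasDerivWithinAt x (v s) (Set.Icc t (t + h₀)) s)
    (hv : ∀ s ∈ Set.Icc t (t + h₀), HasDerivWithinAt v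
      (-(r • v s) - (gradient f (x s) + gradient g (x s) + gradient w (x s)))
      (Set.Icc t (t + h₀)) s)
    (hVb : ∀ s ∈ Set.Icc t (t + h₀), ‖v s‖ ≤ V) :
    ∃ C > 0, ∀ h : ℝ, 0 < h → h ≤ h₀ →
      ∀ xh xp : EuclideanSpace ℝ (Fin n),
        xh + (h ^ 2) • gradient f xh =
          (x t + (h * (1 - r * h)) • v t)
            - (h ^ 2) • gradient w (x t + (h * (1 - r * h)) • v t) + (h ^ 2) • c →
        xp + (h ^ 2) • gradient g xp = xh - (h ^ 2) • c →
        ‖x (t + h) - xp‖ ≤ C * h ^ 2 ∧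
        ‖v (t + h) - (1 / h) • (xp - x t)‖ ≤ C * h ^ 2 := by
  set K := L.toNNReal
  have hfK : LipschitzWith K (gradient f) := lipschitzWith_toNNReal_of_norm_sub_le hfL
  have hgK : LipschitzWith K (gradient g) := lipschitzWith_toNNReal_of_norm_sub_le hgL
  have hwK : LipschitzWith K (gradient w) := lipschitzWith_toNNReal_of_norm_sub_le hwL
  have hsum : ∀ a b d, ‖gradient f a + gradient g b + gradient w d‖ ≤ 3 * G := fun a b d ↦ by
    linarith [norm_add₃_le (a := gradient f a) (b := gradient g b) (c := gradient w d),
      hfG a, hgG b, hwG d]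
  set Cx := 2 * (|r| * V + 3 * G)
  set Cv := |r| * (|r| * V + 3 * G) + ((K + K + K : ℝ≥0) : ℝ) * V
    + 3 * K * ((1 + |r|) * V + 3 * G + ‖c‖)
  refine ⟨|Cx| + |Cv| + 1, by positivity, fun h hh hle xh xp e1 e2 ↦ ?_⟩
  have hh1 : h ≤ 1 := hle.trans hh₀.2
  have hsub : Icc t (t + h) ⊆ Icc t (t + h₀) := Icc_subset_Icc_right (by linarith)
  have hVh := fun s hs ↦ hVb s (hsub hs)
  have hxhat : ‖x t + (h * (1 - r * h)) • v t - x t‖ ≤ (1 + |r|) * V * h := by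
    rw [add_sub_cancel_left]
    exact norm_momentum_smul_le hh.le hh1 (hVh t (left_mem_Icc.2 (by linarith)))
  have hP := admm_norm_sum_sub_le hh.le hh1 hfK hgK hwK hfG hgG hwG e1 e2 hxhat
  obtain ⟨hxerr, hverr⟩ := accelFlow_momentum_step_error_le hh
    (fun s hs ↦ (hx s (hsub hs)).mono hsub) (fun s hs ↦ (hv s (hsub hs)).mono hsub) hVh
    (fun u ↦ hsum u u u) ((hfK.add hgK).add hwK) (hsum _ _ _) hP (admm_step_eq e1 e2)
  exact ⟨hxerr.trans (mul_le_mul_of_nonneg_right (by linarith [le_abs_self Cx, abs_nonneg Cv])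
      (sq_nonneg h)),
    hverr.trans (mul_le_mul_of_nonneg_right (by linarith [le_abs_self Cv, abs_nonneg Cx])
      (sq_nonneg h))⟩

/-- The accelerated ADMM extension with constant damping `r` is a
first-order integrator of the accelerated gradient flow `ẍ + rẋ = -∇(f+g+w)(x)`. -/
theorem stmt_13 {n : ℕ} (r : ℝ) (hr : 0 < r)
    (f g w : EuclideanSpace ℝ (Fin n) → ℝ)
    (hfd : Differentiable ℝ f) (hgd : Differentiable ℝ g) (hwd : Differentiable ℝ w)
    (L G : ℝ)
    (hfL : ∀ u v : EuclideanSpace ℝ (Fin n), ‖gradient f u - gradient f v‖ ≤ L * ‖u - v‖)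
    (hgL : ∀ u v : EuclideanSpace ℝ (Fin n), ‖gradient g u - gradient g v‖ ≤ L * ‖u - v‖)
    (hwL : ∀ u v : EuclideanSpace ℝ (Fin n), ‖gradient w u - gradient w v‖ ≤ L * ‖u - v‖)
    (hfG : ∀ u, ‖gradient f u‖ ≤ G)
    (hgG : ∀ u, ‖gradient g u‖ ≤ G)
    (hwG : ∀ u, ‖gradient w u‖ ≤ G)
    (c : EuclideanSpace ℝ (Fin n))
    (t : ℝ) (h₀ : ℝ) (hh₀ : h₀ ∈ Set.Ioc (0 : ℝ) 1) (V : ℝ) (hV : 0 ≤ V)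
    (x v : ℝ → EuclideanSpace ℝ (Fin n))
    (hx : ∀ s ∈ Set.Icc t (t + h₀),
      HasDerivWithinAt x (v s) (Set.Icc t (t + h₀)) s)
    (hv : ∀ s ∈ Set.Icc t (t + h₀), HasDerivWithinAt v
      (-(r • v s) - (gradient f (x s) + gradient g (x s) + gradient w (x s)))
      (Set.Icc t (t + h₀)) s)
    (hVb : ∀ s ∈ Set.Icc t (t + h₀), ‖v s‖ ≤ V) :
    ∃ C > 0, ∀ h : ℝ, 0 < h → h ≤ h₀ →
      ∀ xh xp : EuclideanSpace ℝ (Fin n),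
        xh + (h ^ 2) • gradient f xh =
          (x t + (h * (1 - r * h)) • v t)
            - (h ^ 2) • gradient w (x t + (h * (1 - r * h)) • v t) + (h ^ 2) • c →
        xp + (h ^ 2) • gradient g xp = xh - (h ^ 2) • c →
        ‖x (t + h) - xp‖ ≤ C * h ^ 2 ∧
        ‖v (t + h) - (1 / h) • (xp - x t)‖ ≤ C * h ^ 2 :=
  stmt_13_general r f g w L G hfL hgL hwL hfG hgG hwG c t h₀ hh₀ V x v hx hv hVb
end

section
/- Let r > 0 and let g, w : ℝⁿ → ℝ be differentiable, with each of ∇g, ∇w L-Lipschitz and bounded in norm by G. Let t ∈ ℝ, h₀ ∈ (0,1], V ≥ 0, and let x, v : ℝ → ℝⁿ be differentiable on [t, t+h₀] with x′(s) = v(s), v′(s) = −r v(s) − (∇g + ∇w)(x(s)), and ‖v(s)‖ ≤ V for all s ∈ [t, t+h₀] (a solution of the accelerated gradient flow with constant damping). Then there exists a constant C > 0 such that for every h ∈ (0, h₀] the following holds: with λ := h², x̂ := x(t) + h(1 − rh)v(t), the Tseng step from x̂, namely x½ with x½ + λ∇g(x½) = x̂ − λ∇w(x̂) and x⁺ :=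 x½ − λ( ∇w(x½) − ∇w(x̂) ), and v⁺ := (x⁺ − x(t))/h, one has ‖x(t+h) − x⁺‖ ≤ C h² and ‖v(t+h) − v⁺‖ ≤ C h². (Hence the accelerated Tseng method with constant damping is a first-order integrator of the accelerated gradient flow ẍ + rẋ = −∇(g+w)(x).) -/
/-!
Applying the Tseng step to the defining equation of `x½` gives `x⁺ = x̂ - h² (∇g + ∇w)(x½)`, i.e.
`x⁺ = x(t) + h v(t) + h² A` and `v⁺ = v(t) + h A` with `A = -r v(t) - (∇g + ∇w)(x½)`. The
mean value inequality compares these with the first-order expansions of `x` and `v` on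
`[t, t + h]`: the position error is `O(h²)` because `v̇` is bounded, and the velocity error is
`O(h²)` because `v̇(s) - A` is `O(h)`, since `v` moves by `O(h)` and `x½` stays within `O(h)` of the
trajectory, where the gradients are Lipschitz.
-/

open Set NNReal

section

variable {E : Type*} [NormedAddCommGroup E] [NormedSpace ℝ E]

theorem norm_image_sub_sub_smul_le_segment {f f' : ℝ → E} {a b C : ℝ} {c : E}
    (hf : ∀ s ∈ Icc a b, HasDerivWithinAt f (f' s) (Icc a b) s)
    (bound : ∀ s ∈ Icc a b, ‖f' s - c‖ ≤ C) :
    ∀ s ∈ Icc a b, ‖f s - f a - (s - a) • c‖ ≤ C * (s - a) := by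
  have hg : ∀ s ∈ Icc a b,
      HasDerivWithinAt (fun s ↦ f s - (s - a) • c) (f' s - c) (Icc a b) s := fun s hs ↦ by
    simpa using (hf s hs).fun_sub (((hasDerivWithinAt_id s _).sub_const a).smul_const c)
  intro s hs
  have := norm_image_sub_le_of_norm_deriv_le_segment' hg
    (fun s hs ↦ bound s (Ico_subset_Icc_self hs)) s hs
  rwa [sub_self, zero_smul, sub_zero, sub_right_comm] at this

theorem norm_neg_smul_sub_le {r V B : ℝ} {y z : E} (hy : ‖y‖ ≤ V) (hz : ‖z‖ ≤ B) :
    ‖-(r • y) - z‖ ≤ |r| * V + B :=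
  calc ‖-(r • y) - z‖ ≤ ‖r • y‖ + ‖z‖ := by simpa only [norm_neg] using norm_sub_le (-(r • y)) z
    _ ≤ |r| * V + B := by rw [norm_smul, Real.norm_eq_abs]; gcongr

/-- The damped flow `ẍ + r ẋ = -F x`, written as a first-order system. -/
structure IsDampedFlowOn (r : ℝ) (F : E → E) (x v : ℝ → E) (s : Set ℝ) : Prop where
  hasDerivWithinAt_position : ∀ τ ∈ s, HasDerivWithinAt x (v τ) s τ
  hasDerivWithinAt_velocity : ∀ τ ∈ s, HasDerivWithinAt v (-(r • v τ) - F (x τ)) s τ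

namespace IsDampedFlowOn

variable {r t h V B : ℝ} {F : E → E} {x v : ℝ → E}

theorem mono {s s' : Set ℝ} (hflow : IsDampedFlowOn r F x v s) (hs : s' ⊆ s) :
    IsDampedFlowOn r F x v s' :=
  ⟨fun τ hτ ↦ (hflow.1 τ (hs hτ)).mono hs, fun τ hτ ↦ (hflow.2 τ (hs hτ)).mono hs⟩

theorem norm_position_sub_le (hflow : IsDampedFlowOn r F x v (Icc t (t + h)))
    (hV : ∀ s ∈ Icc t (t + h), ‖v s‖ ≤ V) : ∀ s ∈ Icc t (t + h), ‖x s - x t‖ ≤ V * (s - t) :=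
  norm_image_sub_le_of_norm_deriv_le_segment' hflow.1 fun s hs ↦ hV s (Ico_subset_Icc_self hs)

theorem norm_velocity_sub_le (hflow : IsDampedFlowOn r F x v (Icc t (t + h)))
    (hV : ∀ s ∈ Icc t (t + h), ‖v s‖ ≤ V) (hF : ∀ u, ‖F u‖ ≤ B) :
    ∀ s ∈ Icc t (t + h), ‖v s - v t‖ ≤ (|r| * V + B) * (s - t) :=
  norm_image_sub_le_of_norm_deriv_le_segment' hflow.2 fun s hs ↦
    norm_neg_smul_sub_le (hV s (Ico_subset_Icc_self hs)) (hF _)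

theorem norm_velocity_sub_le_mul_length (hh : 0 ≤ h)
    (hflow : IsDampedFlowOn r F x v (Icc t (t + h))) (hV : ∀ s ∈ Icc t (t + h), ‖v s‖ ≤ V)
    (hF : ∀ u, ‖F u‖ ≤ B) : ∀ s ∈ Icc t (t + h), ‖v s - v t‖ ≤ (|r| * V + B) * h := by
  intro s hs
  have hV0 : 0 ≤ V := (norm_nonneg _).trans (hV t ⟨le_rfl, by linarith⟩)
  have hB0 : 0 ≤ B := (norm_nonneg _).trans (hF 0)
  exact (hflow.norm_velocity_sub_le hV hF s hs).trans (by gcongr; linarith [hs.2])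

theorem norm_position_sub_taylor_le (hh : 0 ≤ h) (hflow : IsDampedFlowOn r F x v (Icc t (t + h)))
    (hV : ∀ s ∈ Icc t (t + h), ‖v s‖ ≤ V) (hF : ∀ u, ‖F u‖ ≤ B) :
    ‖x (t + h) - x t - h • v t‖ ≤ (|r| * V + B) * h * h := by
  simpa using norm_image_sub_sub_smul_le_segment hflow.1
    (fun s hs ↦ norm_velocity_sub_le_mul_length hh hflow hV hF s hs) (t + h) ⟨by linarith, le_rfl⟩

theorem norm_velocity_sub_taylor_le (hh : 0 ≤ h) (hflow : IsDampedFlowOn r F x v (Icc t (t + h)))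
    (hV : ∀ s ∈ Icc t (t + h), ‖v s‖ ≤ V) (hF : ∀ u, ‖F u‖ ≤ B) {K : ℝ≥0}
    (hK : LipschitzWith K F) {p : E} {ρ : ℝ} (hp : ∀ s ∈ Icc t (t + h), ‖x s - p‖ ≤ ρ) :
    ‖v (t + h) - v t - h • (-(r • v t) - F p)‖ ≤ (|r| * ((|r| * V + B) * h) + K * ρ) * h := by
  have bound : ∀ s ∈ Icc t (t + h), ‖(-(r • v s) - F (x s)) - (-(r • v t) - F p)‖
      ≤ |r| * ((|r| * V + B) * h) + K * ρ := fun s hs ↦ by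
    rw [show (-(r • v s) - F (x s)) - (-(r • v t) - F p)
      = -(r • (v s - v t)) - (F (x s) - F p) by module]
    exact norm_neg_smul_sub_le (norm_velocity_sub_le_mul_length hh hflow hV hF s hs)
      ((hK.norm_sub_le _ _).trans (by gcongr; exact hp s hs))
  simpa using norm_image_sub_sub_smul_le_segment hflow.2 bound (t + h) ⟨by linarith, le_rfl⟩

theorem norm_position_sub_momentum_step_le (hh : 0 ≤ h)
    (hflow : IsDampedFlowOn r F x v (Icc t (t + h))) (hV : ∀ s ∈ Icc t (t + h), ‖v s‖ ≤ V)
    (hF : ∀ u, ‖F u‖ ≤ B) (q : E) :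
    ‖x (t + h) - (x t + (h * (1 - r * h)) • v t - h ^ 2 • F q)‖ ≤ 2 * (|r| * V + B) * h ^ 2 := by
  rw [show x (t + h) - (x t + (h * (1 - r * h)) • v t - h ^ 2 • F q)
    = (x (t + h) - x t - h • v t) - h ^ 2 • (-(r • v t) - F q) by module]
  have hA : ‖-(r • v t) - F q‖ ≤ |r| * V + B :=
    norm_neg_smul_sub_le (hV t ⟨le_rfl, by linarith⟩) (hF q)
  calc _ ≤ ‖x (t + h) - x t - h • v t‖ + ‖h ^ 2 • (-(r • v t) - F q)‖ := norm_sub_le _ _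
    _ ≤ (|r| * V + B) * h * h + h ^ 2 * (|r| * V + B) := by
      rw [norm_smul_of_nonneg (sq_nonneg h)]
      gcongr
      exact hflow.norm_position_sub_taylor_le hh hV hF
    _ = 2 * (|r| * V + B) * h ^ 2 := by ring

theorem norm_velocity_sub_momentum_step_le (hh : 0 < h)
    (hflow : IsDampedFlowOn r F x v (Icc t (t + h))) (hV : ∀ s ∈ Icc t (t + h), ‖v s‖ ≤ V)
    (hF : ∀ u, ‖F u‖ ≤ B) {K : ℝ≥0} (hK : LipschitzWith K F) {q : E} {ρ : ℝ}
    (hq : ∀ s ∈ Icc t (t + h), ‖x s - q‖ ≤ ρ) :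
    ‖v (t + h) - (1 / h) • ((x t + (h * (1 - r * h)) • v t - h ^ 2 • F q) - x t)‖
      ≤ (|r| * ((|r| * V + B) * h) + K * ρ) * h := by
  rw [show (x t + (h * (1 - r * h)) • v t - h ^ 2 • F q) - x t
    = h • (v t + h • (-(r • v t) - F q)) by module, smul_smul, one_div,
    inv_mul_cancel₀ hh.ne', one_smul, ← sub_sub]
  exact hflow.norm_velocity_sub_taylor_le hh.le hV hF hK hq

end IsDampedFlowOn

variable {Fg Fw : E → E} {c G : ℝ} {xhat xh : E}

theorem tseng_step_eq (hxh : xh + c • Fg xh = xhat - c • Fw xhat) :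
    xh - c • (Fw xh - Fw xhat) = xhat - c • (Fg + Fw) xh := by
  rw [Pi.add_apply]
  linear_combination (norm := module) hxh

theorem norm_sub_tseng_half_le (hc : 0 ≤ c) (hg : ∀ u, ‖Fg u‖ ≤ G) (hw : ∀ u, ‖Fw u‖ ≤ G)
    (hxh : xh + c • Fg xh = xhat - c • Fw xhat) : ‖xhat - xh‖ ≤ c * (2 * G) := by
  rw [show xhat - xh = c • (Fw xhat + Fg xh) by linear_combination (norm := module) -hxh,
    norm_smul_of_nonneg hc]
  gcongr
  linarith [norm_add_le (Fw xhat) (Fg xh), hw xhat, hg xh]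

theorem IsDampedFlowOn.norm_position_sub_tseng_half_le {r t h V : ℝ} {F : E → E} {x v : ℝ → E}
    (hh : 0 ≤ h) (hh1 : h ≤ 1) (hflow : IsDampedFlowOn r F x v (Icc t (t + h)))
    (hV : ∀ s ∈ Icc t (t + h), ‖v s‖ ≤ V) (hg : ∀ u, ‖Fg u‖ ≤ G) (hw : ∀ u, ‖Fw u‖ ≤ G)
    (hxh : xh + h ^ 2 • Fg xh = (x t + (h * (1 - r * h)) • v t)
      - h ^ 2 • Fw (x t + (h * (1 - r * h)) • v t)) :
    ∀ s ∈ Icc t (t + h), ‖x s - xh‖ ≤ ((2 + |r|) * V + 2 * G) * h := by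
  intro s hs
  set xhat := x t + (h * (1 - r * h)) • v t
  have hvt : ‖v t‖ ≤ V := hV t ⟨le_rfl, by linarith⟩
  have hG : 0 ≤ G := (norm_nonneg _).trans (hg 0)
  have hxs : ‖x s - x t‖ ≤ V * h :=
    (hflow.norm_position_sub_le hV s hs).trans
      (by gcongr; exacts [(norm_nonneg _).trans hvt, by linarith [hs.2]])
  have hxt : ‖x t - xhat‖ ≤ (1 + |r|) * V * h := by
    have hdamp : |1 - r * h| ≤ 1 + |r| := by
      calc |1 - r * h| ≤ |1| + |r * h| := abs_sub _ _
        _ ≤ 1 + |r| := by rw [abs_one, abs_mul, abs_of_nonneg hh]; gcongr; nlinarith [abs_nonneg r]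
    rw [show x t - xhat = -((h * (1 - r * h)) • v t) by simp [xhat], norm_neg, norm_smul,
      Real.norm_eq_abs, abs_mul, abs_of_nonneg hh]
    calc h * |1 - r * h| * ‖v t‖ ≤ h * (1 + |r|) * V := by gcongr
      _ = (1 + |r|) * V * h := by ring
  have hxh' : ‖xhat - xh‖ ≤ h * (2 * G) :=
    (norm_sub_tseng_half_le (sq_nonneg h) hg hw hxh).trans (by gcongr; nlinarith)
  calc ‖x s - xh‖ = ‖(x s - x t) + (x t - xhat) + (xhat - xh)‖ := by congr 1; abel
    _ ≤ ‖x s - x t‖ + ‖x t - xhat‖ + ‖xhat - xh‖ := norm_add₃_le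
    _ ≤ ((2 + |r|) * V + 2 * G) * h := by linarith

/-- `|r| V + 2G` bounds `‖v̇‖`, and `((2 + |r|) V + 2G) h` bounds the distance from the
trajectory to `x½`. -/
def tsengErrorConst (r V G K : ℝ) : ℝ :=
  (2 + |r|) * (|r| * V + 2 * G) + K * ((2 + |r|) * V + 2 * G)

theorem tseng_error_le {r t h V : ℝ} {x v : ℝ → E} {Kg Kw : ℝ≥0}
    (hh : 0 < h) (hh1 : h ≤ 1) (hflow : IsDampedFlowOn r (Fg + Fw) x v (Icc t (t + h)))
    (hV : ∀ s ∈ Icc t (t + h), ‖v s‖ ≤ V) (hg : ∀ u, ‖Fg u‖ ≤ G) (hw : ∀ u, ‖Fw u‖ ≤ G)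
    (hgK : LipschitzWith Kg Fg) (hwK : LipschitzWith Kw Fw)
    (hxh : xh + h ^ 2 • Fg xh = (x t + (h * (1 - r * h)) • v t)
      - h ^ 2 • Fw (x t + (h * (1 - r * h)) • v t)) :
    ‖x (t + h) - (xh - h ^ 2 • (Fw xh - Fw (x t + (h * (1 - r * h)) • v t)))‖
        ≤ tsengErrorConst r V G (Kg + Kw) * h ^ 2 ∧
      ‖v (t + h) - (1 / h) • ((xh - h ^ 2 • (Fw xh - Fw (x t + (h * (1 - r * h)) • v t)))
        - x t)‖ ≤ tsengErrorConst r V G (Kg + Kw) * h ^ 2 := by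
  have hV0 : 0 ≤ V := (norm_nonneg _).trans (hV t ⟨le_rfl, by linarith⟩)
  have hG : 0 ≤ G := (norm_nonneg _).trans (hg 0)
  have hF : ∀ u, ‖(Fg + Fw) u‖ ≤ 2 * G := fun u ↦
    (norm_add_le (Fg u) (Fw u)).trans (by linarith [hg u, hw u])
  have hM : 0 ≤ |r| * V + 2 * G := by positivity
  rw [tseng_step_eq hxh]
  constructor
  · refine (hflow.norm_position_sub_momentum_step_le hh.le hV hF xh).trans ?_
    unfold tsengErrorConst
    gcongr
    nlinarith [mul_nonneg (abs_nonneg r) hM,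
      (by positivity : 0 ≤ ((Kg : ℝ) + Kw) * ((2 + |r|) * V + 2 * G))]
  · refine (hflow.norm_velocity_sub_momentum_step_le hh hV hF (hgK.add hwK)
      (hflow.norm_position_sub_tseng_half_le hh.le hh1 hV hg hw hxh)).trans ?_
    calc _ = (|r| * (|r| * V + 2 * G) + ((Kg : ℝ) + Kw) * ((2 + |r|) * V + 2 * G)) * h ^ 2 := by
          push_cast; ring
      _ ≤ tsengErrorConst r V G (Kg + Kw) * h ^ 2 := by
          unfold tsengErrorConst
          gcongr
          linarith

end

theorem stmt_14_general {n : ℕ} (r : ℝ)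
    (g w : EuclideanSpace ℝ (Fin n) → ℝ)
    (L G : ℝ)
    (hgL : ∀ u v : EuclideanSpace ℝ (Fin n), ‖gradient g u - gradient g v‖ ≤ L * ‖u - v‖)
    (hwL : ∀ u v : EuclideanSpace ℝ (Fin n), ‖gradient w u - gradient w v‖ ≤ L * ‖u - v‖)
    (hgG : ∀ u, ‖gradient g u‖ ≤ G)
    (hwG : ∀ u, ‖gradient w u‖ ≤ G)
    (t : ℝ) (h₀ : ℝ) (hh₀ : h₀ ∈ Set.Ioc (0 : ℝ) 1) (V : ℝ)
    (x v : ℝ → EuclideanSpace ℝ (Fin n))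
    (hx : ∀ s ∈ Set.Icc t (t + h₀),
      HasDerivWithinAt x (v s) (Set.Icc t (t + h₀)) s)
    (hv : ∀ s ∈ Set.Icc t (t + h₀), HasDerivWithinAt v
      (-(r • v s) - (gradient g (x s) + gradient w (x s)))
      (Set.Icc t (t + h₀)) s)
    (hVb : ∀ s ∈ Set.Icc t (t + h₀), ‖v s‖ ≤ V) :
    ∃ C > 0, ∀ h : ℝ, 0 < h → h ≤ h₀ →
      ∀ xh : EuclideanSpace ℝ (Fin n),
        xh + (h ^ 2) • gradient g xh =
          (x t + (h * (1 - r * h)) • v t)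
            - (h ^ 2) • gradient w (x t + (h * (1 - r * h)) • v t) →
        ‖x (t + h) - (xh - (h ^ 2) • (gradient w xh
            - gradient w (x t + (h * (1 - r * h)) • v t)))‖ ≤ C * h ^ 2 ∧
        ‖v (t + h) - (1 / h) • ((xh - (h ^ 2) • (gradient w xh
            - gradient w (x t + (h * (1 - r * h)) • v t))) - x t)‖ ≤ C * h ^ 2 := by
  have hflow : IsDampedFlowOn r (gradient g + gradient w) x v (Icc t (t + h₀)) := ⟨hx, hv⟩
  have hgK : LipschitzWith L.toNNReal (gradient g) :=
    .of_dist_le' (by simpa only [dist_eq_norm] using hgL)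
  have hwK : LipschitzWith L.toNNReal (gradient w) :=
    .of_dist_le' (by simpa only [dist_eq_norm] using hwL)
  set C := tsengErrorConst r V G (L.toNNReal + L.toNNReal)
  refine ⟨max C 1, lt_max_of_lt_right one_pos, fun h hh hhh₀ xh hxh ↦ ?_⟩
  have hsub : Icc t (t + h) ⊆ Icc t (t + h₀) := Icc_subset_Icc_right (by linarith)
  have hC : C * h ^ 2 ≤ max C 1 * h ^ 2 := by gcongr; exact le_max_left C 1
  obtain ⟨hpos, hvel⟩ := tseng_error_le hh (hhh₀.trans hh₀.2) (hflow.mono hsub)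
    (fun s hs ↦ hVb s (hsub hs)) hgG hwG hgK hwK hxh
  exact ⟨hpos.trans hC, hvel.trans hC⟩

/-- The accelerated Tseng method with constant damping `r` is a
first-order integrator of the accelerated gradient flow `ẍ + rẋ = -∇(g+w)(x)`. -/
theorem stmt_14 {n : ℕ} (r : ℝ) (hr : 0 < r)
    (g w : EuclideanSpace ℝ (Fin n) → ℝ)
    (hgd : Differentiable ℝ g) (hwd : Differentiable ℝ w)
    (L G : ℝ)
    (hgL : ∀ u v : EuclideanSpace ℝ (Fin n), ‖gradient g u - gradient g v‖ ≤ L * ‖u - v‖)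
    (hwL : ∀ u v : EuclideanSpace ℝ (Fin n), ‖gradient w u - gradient w v‖ ≤ L * ‖u - v‖)
    (hgG : ∀ u, ‖gradient g u‖ ≤ G)
    (hwG : ∀ u, ‖gradient w u‖ ≤ G)
    (t : ℝ) (h₀ : ℝ) (hh₀ : h₀ ∈ Set.Ioc (0 : ℝ) 1) (V : ℝ) (hV : 0 ≤ V)
    (x v : ℝ → EuclideanSpace ℝ (Fin n))
    (hx : ∀ s ∈ Set.Icc t (t + h₀),
      HasDerivWithinAt x (v s) (Set.Icc t (t + h₀)) s)
    (hv : ∀ s ∈ Set.Icc t (t + h₀), HasDerivWithinAt v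
      (-(r • v s) - (gradient g (x s) + gradient w (x s)))
      (Set.Icc t (t + h₀)) s)
    (hVb : ∀ s ∈ Set.Icc t (t + h₀), ‖v s‖ ≤ V) :
    ∃ C > 0, ∀ h : ℝ, 0 < h → h ≤ h₀ →
      ∀ xh : EuclideanSpace ℝ (Fin n),
        xh + (h ^ 2) • gradient g xh =
          (x t + (h * (1 - r * h)) • v t)
            - (h ^ 2) • gradient w (x t + (h * (1 - r * h)) • v t) →
        ‖x (t + h) - (xh - (h ^ 2) • (gradient w xh
            - gradient w (x t + (h * (1 - r * h)) • v t)))‖ ≤ C * h ^ 2 ∧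
        ‖v (t + h) - (1 / h) • ((xh - (h ^ 2) • (gradient w xh
            - gradient w (x t + (h * (1 - r * h)) • v t))) - x t)‖ ≤ C * h ^ 2 :=
  stmt_14_general r g w L G hgL hwL hgG hwG t h₀ hh₀ V x v hx hv hVb
end

section
/- Let r ≥ 3 and let f, g, w : ℝⁿ → ℝ be differentiable, with each of ∇f, ∇g, ∇w L-Lipschitz and bounded in norm by G. Let t > 0, h₀ ∈ (0,1], V ≥ 0, and let x, v : ℝ → ℝⁿ be differentiable on [t, t+h₀] with x′(s) = v(s), v′(s) = −(r/s) v(s) − (∇f + ∇g + ∇w)(x(s)), and ‖v(s)‖ ≤ V for all s ∈ [t, t+h₀] (a solution of the accelerated gradient flow with decaying damping r/t). Then there exists a constant C > 0 such that for every h ∈ (0, h₀] the following holds: with λ := h², x̂ := x(t) + h·( t/(t + rh) )·v(t), and the Davis–Yin step from x̂, namely x¼ with x¼ + λ∇f(x¼) = x̂, x½ := 2x¼ − x̂, x¾ with x¾ + λ∇g(x¾) = x½ − λ∇w(x¼), x⁺ := x̂ + x¾ − x¼, and v⁺ := (x⁺ − x(t))/h, one has ‖x(t+h) − x⁺‖ ≤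 C h² and ‖v(t+h) − v⁺‖ ≤ C h². (Hence the accelerated Davis–Yin method with Nesterov-type decaying damping is a first-order integrator of the accelerated gradient flow ẍ + (r/t)ẋ = −∇(f+g+w)(x); note that at time t = kh the momentum coefficient k/(k+r) equals t/(t+rh).) -/
/-!
Along the flow, `x(t+h) = x(t) + h v(t) + O(h²)` and `v(t+h) = v(t) + h v̇(t) + O(h²)`, because
`v̇ = -(r/s) v - ∇F(x)` is itself Lipschitz in time on `[t, t+h₀]`. Eliminating the resolvents, the
Davis–Yin step is `x⁺ = x(t) + hγ v(t) - h² d` with `γ = t/(t+rh)` and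
`d = ∇f(x¼) + ∇g(x¾) + ∇w(x¼)`, so `v⁺ = γ v(t) - h d`. Since `1 - γ = rh/t + O(h²)` and the
resolvent points lie within `O(h)` of `x(t)`, so that `d = ∇F(x(t)) + O(h)`, both errors are
`O(h²)`.
-/

open Set

section MeanValue

variable {E : Type*} [NormedAddCommGroup E] [NormedSpace ℝ E] {u u' : ℝ → E} {a b C : ℝ}

theorem norm_sub_le_mul_sub_of_hasDerivWithinAt
    (hu : ∀ s ∈ Icc a b, HasDerivWithinAt u (u' s) (Icc a b) s)
    (hC : ∀ s ∈ Icc a b, ‖u' s‖ ≤ C) {s : ℝ} (hs : s ∈ Icc a b) :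
    ‖u s - u a‖ ≤ C * (s - a) := by
  have := (convex_Icc a b).norm_image_sub_le_of_norm_hasDerivWithin_le hu hC
    (left_mem_Icc.2 (hs.1.trans hs.2)) hs
  rwa [Real.norm_of_nonneg (sub_nonneg.2 hs.1)] at this

theorem norm_sub_sub_smul_le_of_hasDerivWithinAt_s15 (hab : a ≤ b)
    (hu : ∀ s ∈ Icc a b, HasDerivWithinAt u (u' s) (Icc a b) s)
    (hu' : ∀ s ∈ Icc a b, ‖u' s - u' a‖ ≤ C * (s - a)) :
    ‖u b - u a - (b - a) • u' a‖ ≤ C * (b - a) ^ 2 := by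
  rcases hab.eq_or_lt with rfl | hlt
  · simp
  have hC : 0 ≤ C :=
    nonneg_of_mul_nonneg_left ((norm_nonneg _).trans (hu' b ⟨hab, le_rfl⟩)) (sub_pos.2 hlt)
  have hrem : ∀ s ∈ Icc a b, HasDerivWithinAt (fun s ↦ u s - (s - a) • u' a)
      (u' s - u' a) (Icc a b) s := fun s hs ↦ by
    have := (hu s hs).sub (((hasDerivWithinAt_id s _).sub_const a).smul_const (u' a))
    rwa [one_smul] at this
  have := norm_sub_le_mul_sub_of_hasDerivWithinAt (C := C * (b - a)) hrem
    (fun s hs ↦ (hu' s hs).trans (mul_le_mul_of_nonneg_left (by linarith [hs.2]) hC))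
    (right_mem_Icc.2 hab)
  rwa [sub_self, zero_smul, sub_zero, sub_right_comm, mul_assoc, ← sq] at this

end MeanValue

section MomentumCoefficient

variable {r t h : ℝ}

theorem div_add_mul_mem_Icc (hr : 0 ≤ r) (ht : 0 < t) (hh : 0 ≤ h) :
    t / (t + r * h) ∈ Icc 0 1 :=
  ⟨by positivity, div_le_one_of_le₀ (by nlinarith) (by positivity)⟩

theorem one_sub_div_add_mul_eq (hr : 0 ≤ r) (ht : 0 < t) (hh : 0 ≤ h) :
    1 - t / (t + r * h) = r * h / (t + r * h) := by
  field_simp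
  ring

theorem one_sub_div_add_mul_le (hr : 0 ≤ r) (ht : 0 < t) (hh : 0 ≤ h) :
    1 - t / (t + r * h) ≤ r / t * h := by
  rw [one_sub_div_add_mul_eq hr ht hh, div_mul_eq_mul_div]
  exact div_le_div_of_nonneg_left (by positivity) ht (by nlinarith)

theorem abs_one_sub_div_add_mul_sub_le (hr : 0 ≤ r) (ht : 0 < t) (hh : 0 ≤ h) :
    |1 - t / (t + r * h) - h * (r / t)| ≤ (r / t) ^ 2 * h ^ 2 := by
  have : 1 - t / (t + r * h) - h * (r / t) = -((r * h) ^ 2 / (t * (t + r * h))) := by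
    rw [one_sub_div_add_mul_eq hr ht hh]
    field_simp
    ring
  rw [this, abs_neg, abs_of_nonneg (by positivity), div_pow, div_mul_eq_mul_div, ← mul_pow,
    sq t]
  exact div_le_div_of_nonneg_left (by positivity) (by positivity)
    (mul_le_mul_of_nonneg_left (by nlinarith) ht.le)

end MomentumCoefficient

section DampedFlow

variable {E : Type*} [NormedAddCommGroup E] [NormedSpace ℝ E] {Φ : E → E} {K : NNReal}
  {x v : ℝ → E} {r t T V B h : ℝ}

theorem norm_dampedAccel_le (hr : 0 ≤ r) (ht : 0 < t) (hΦB : ∀ y, ‖Φ y‖ ≤ B)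
    (hV : ∀ s ∈ Icc t T, ‖v s‖ ≤ V) {s : ℝ} (hs : s ∈ Icc t T) :
    ‖-((r / s) • v s) - Φ (x s)‖ ≤ r / t * V + B := by
  have hrs : r / s ≤ r / t := div_le_div_of_nonneg_left hr ht hs.1
  calc ‖-((r / s) • v s) - Φ (x s)‖ ≤ r / s * ‖v s‖ + ‖Φ (x s)‖ := by
        refine (norm_sub_le _ _).trans_eq ?_
        rw [norm_neg, norm_smul, Real.norm_of_nonneg (div_nonneg hr (ht.trans_le hs.1).le)]
    _ ≤ r / t * V + B := by
        gcongr
        exacts [hV s hs, hΦB _]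

theorem norm_dampedAccel_sub_le (hr : 0 ≤ r) (ht : 0 < t) (hΦB : ∀ y, ‖Φ y‖ ≤ B)
    (hΦ : LipschitzWith K Φ)
    (hx : ∀ s ∈ Icc t T, HasDerivWithinAt x (v s) (Icc t T) s)
    (hv : ∀ s ∈ Icc t T, HasDerivWithinAt v (-((r / s) • v s) - Φ (x s)) (Icc t T) s)
    (hV : ∀ s ∈ Icc t T, ‖v s‖ ≤ V) {s : ℝ} (hs : s ∈ Icc t T) :
    ‖(-((r / s) • v s) - Φ (x s)) - (-((r / t) • v t) - Φ (x t))‖ ≤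
      (r / t * (r / t * V + B) + r / t ^ 2 * V + K * V) * (s - t) := by
  have hs0 : 0 < s := ht.trans_le hs.1
  have htT : t ∈ Icc t T := left_mem_Icc.2 (hs.1.trans hs.2)
  have hrs : r / s ≤ r / t := div_le_div_of_nonneg_left hr ht hs.1
  have hvs : ‖v s - v t‖ ≤ (r / t * V + B) * (s - t) :=
    norm_sub_le_mul_sub_of_hasDerivWithinAt hv (fun _ ↦ norm_dampedAccel_le hr ht hΦB hV) hs
  have hxs : ‖x s - x t‖ ≤ V * (s - t) := norm_sub_le_mul_sub_of_hasDerivWithinAt hx hV hs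
  have hrts : r / t - r / s ≤ r / t ^ 2 * (s - t) :=
    calc r / t - r / s = r / (t * s) * (s - t) := by field_simp
      _ ≤ r / t ^ 2 * (s - t) :=
        mul_le_mul_of_nonneg_right
          (div_le_div_of_nonneg_left hr (by positivity) (by rw [sq]; gcongr; exact hs.1))
          (sub_nonneg.2 hs.1)
  have hsplit : (-((r / s) • v s) - Φ (x s)) - (-((r / t) • v t) - Φ (x t)) =
      -((r / s) • (v s - v t)) + (r / t - r / s) • v t + (Φ (x t) - Φ (x s)) := by
    rw [smul_sub, sub_smul]; abel
  rw [hsplit]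
  refine (norm_add₃_le ..).trans ?_
  rw [norm_neg, norm_smul, norm_smul, Real.norm_of_nonneg (by positivity),
    Real.norm_of_nonneg (sub_nonneg.2 hrs), norm_sub_rev (Φ _)]
  calc r / s * ‖v s - v t‖ + (r / t - r / s) * ‖v t‖ + ‖Φ (x s) - Φ (x t)‖
      ≤ r / t * ((r / t * V + B) * (s - t)) + r / t ^ 2 * (s - t) * V + K * (V * (s - t)) := by
        gcongr ?_ + ?_ + ?_
        · exact mul_le_mul hrs hvs (norm_nonneg _) (div_nonneg hr ht.le)
        · exact mul_le_mul hrts (hV t htT) (norm_nonneg _) ((sub_nonneg.2 hrs).trans hrts)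
        · exact (hΦ.norm_sub_le _ _).trans (by gcongr)
    _ = (r / t * (r / t * V + B) + r / t ^ 2 * V + K * V) * (s - t) := by ring

theorem norm_position_sub_sub_smul_le (hr : 0 ≤ r) (ht : 0 < t) (hΦB : ∀ y, ‖Φ y‖ ≤ B)
    (hx : ∀ s ∈ Icc t T, HasDerivWithinAt x (v s) (Icc t T) s)
    (hv : ∀ s ∈ Icc t T, HasDerivWithinAt v (-((r / s) • v s) - Φ (x s)) (Icc t T) s)
    (hV : ∀ s ∈ Icc t T, ‖v s‖ ≤ V) (hh : 0 ≤ h) (hhT : t + h ≤ T) :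
    ‖x (t + h) - x t - h • v t‖ ≤ (r / t * V + B) * h ^ 2 := by
  have hsub : Icc t (t + h) ⊆ Icc t T := Icc_subset_Icc_right hhT
  have := norm_sub_sub_smul_le_of_hasDerivWithinAt_s15 (le_add_of_nonneg_right hh)
    (fun s hs ↦ (hx s (hsub hs)).mono hsub) fun s hs ↦
      norm_sub_le_mul_sub_of_hasDerivWithinAt hv (fun _ ↦ norm_dampedAccel_le hr ht hΦB hV)
        (hsub hs)
  rwa [add_sub_cancel_left] at this

theorem norm_velocity_sub_sub_smul_le (hr : 0 ≤ r) (ht : 0 < t) (hΦB : ∀ y, ‖Φ y‖ ≤ B)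
    (hΦ : LipschitzWith K Φ)
    (hx : ∀ s ∈ Icc t T, HasDerivWithinAt x (v s) (Icc t T) s)
    (hv : ∀ s ∈ Icc t T, HasDerivWithinAt v (-((r / s) • v s) - Φ (x s)) (Icc t T) s)
    (hV : ∀ s ∈ Icc t T, ‖v s‖ ≤ V) (hh : 0 ≤ h) (hhT : t + h ≤ T) :
    ‖v (t + h) - v t - h • (-((r / t) • v t) - Φ (x t))‖ ≤
      (r / t * (r / t * V + B) + r / t ^ 2 * V + K * V) * h ^ 2 := by
  have hsub : Icc t (t + h) ⊆ Icc t T := Icc_subset_Icc_right hhT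
  have := norm_sub_sub_smul_le_of_hasDerivWithinAt_s15 (le_add_of_nonneg_right hh)
    (fun s hs ↦ (hv s (hsub hs)).mono hsub) fun s hs ↦
      norm_dampedAccel_sub_le hr ht hΦB hΦ hx hv hV (hsub hs)
  rwa [add_sub_cancel_left] at this

theorem norm_position_sub_momentumStep_le (hr : 0 ≤ r) (ht : 0 < t) (hΦB : ∀ y, ‖Φ y‖ ≤ B)
    (hx : ∀ s ∈ Icc t T, HasDerivWithinAt x (v s) (Icc t T) s)
    (hv : ∀ s ∈ Icc t T, HasDerivWithinAt v (-((r / s) • v s) - Φ (x s)) (Icc t T) s)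
    (hV : ∀ s ∈ Icc t T, ‖v s‖ ≤ V) (hh : 0 ≤ h) (hhT : t + h ≤ T) {d : E} (hd : ‖d‖ ≤ B) :
    ‖x (t + h) - (x t + (h * (t / (t + r * h))) • v t - h ^ 2 • d)‖ ≤
      2 * (r / t * V + B) * h ^ 2 := by
  have hsplit : x (t + h) - (x t + (h * (t / (t + r * h))) • v t - h ^ 2 • d) =
      (x (t + h) - x t - h • v t) + (h * (1 - t / (t + r * h))) • v t + h ^ 2 • d := by
    module
  rw [hsplit]
  refine (norm_add₃_le ..).trans ?_
  rw [norm_smul, norm_smul, Real.norm_of_nonneg (mul_nonneg hh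
    (sub_nonneg.2 (div_add_mul_mem_Icc hr ht hh).2)), Real.norm_of_nonneg (by positivity)]
  calc _ ≤ (r / t * V + B) * h ^ 2 + h * (r / t * h) * V + h ^ 2 * B := by
        gcongr
        · exact norm_position_sub_sub_smul_le hr ht hΦB hx hv hV hh hhT
        · exact one_sub_div_add_mul_le hr ht hh
        · exact hV t (left_mem_Icc.2 ((le_add_of_nonneg_right hh).trans hhT))
    _ = 2 * (r / t * V + B) * h ^ 2 := by ring

theorem norm_velocity_sub_momentumStep_le (hr : 0 ≤ r) (ht : 0 < t) (hΦB : ∀ y, ‖Φ y‖ ≤ B)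
    (hΦ : LipschitzWith K Φ)
    (hx : ∀ s ∈ Icc t T, HasDerivWithinAt x (v s) (Icc t T) s)
    (hv : ∀ s ∈ Icc t T, HasDerivWithinAt v (-((r / s) • v s) - Φ (x s)) (Icc t T) s)
    (hV : ∀ s ∈ Icc t T, ‖v s‖ ≤ V) (hh : 0 < h) (hhT : t + h ≤ T) {d : E} {D : ℝ}
    (hd : ‖d - Φ (x t)‖ ≤ D * h) :
    ‖v (t + h) - (1 / h) • (x t + (h * (t / (t + r * h))) • v t - h ^ 2 • d - x t)‖ ≤
      (r / t * (r / t * V + B) + r / t ^ 2 * V + K * V + (r / t) ^ 2 * V + D) * h ^ 2 := by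
  have hsplit : v (t + h) - (1 / h) • (x t + (h * (t / (t + r * h))) • v t - h ^ 2 • d - x t) =
      (v (t + h) - v t - h • (-((r / t) • v t) - Φ (x t)))
        + (1 - t / (t + r * h) - h * (r / t)) • v t + h • (d - Φ (x t)) := by
    match_scalars <;> field_simp <;> ring
  rw [hsplit]
  refine (norm_add₃_le ..).trans ?_
  rw [norm_smul, norm_smul, Real.norm_eq_abs, Real.norm_of_nonneg hh.le]
  calc _ ≤ (r / t * (r / t * V + B) + r / t ^ 2 * V + K * V) * h ^ 2
          + (r / t) ^ 2 * h ^ 2 * V + h * (D * h) := by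
        gcongr
        · exact norm_velocity_sub_sub_smul_le hr ht hΦB hΦ hx hv hV hh.le hhT
        · exact abs_one_sub_div_add_mul_sub_le hr ht hh.le
        · exact hV t (left_mem_Icc.2 ((le_add_of_nonneg_right hh.le).trans hhT))
    _ = _ := by ring

end DampedFlow

section DavisYin

variable {E : Type*} [NormedAddCommGroup E] [NormedSpace ℝ E] {F₁ F₂ F₃ : E → E}
  {x₀ y xq xt : E} {τ : ℝ}

theorem davisYin_sub_eq_s15 (hq : xq + τ • F₁ xq = y)
    (ht : xt + τ • F₂ xt = (2 : ℝ) • xq - y - τ • F₃ xq) :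
    xt - xq = -(τ • (F₁ xq + F₂ xt + F₃ xq)) := by
  linear_combination (norm := module) ht + hq

theorem norm_davisYin_sub_le {K : NNReal} {G : ℝ} (hF₁ : LipschitzWith K F₁)
    (hF₂ : LipschitzWith K F₂) (hF₃ : LipschitzWith K F₃) (hG₁ : ∀ z, ‖F₁ z‖ ≤ G)
    (hG₂ : ∀ z, ‖F₂ z‖ ≤ G) (hG₃ : ∀ z, ‖F₃ z‖ ≤ G) (hτ : 0 ≤ τ) (hq : xq + τ • F₁ xq = y)
    (ht : xt + τ • F₂ xt = (2 : ℝ) • xq - y - τ • F₃ xq) :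
    ‖F₁ xq + F₂ xt + F₃ xq - (F₁ x₀ + F₂ x₀ + F₃ x₀)‖ ≤ K * (3 * ‖y - x₀‖ + 6 * τ * G) := by
  have hxq : ‖xq - x₀‖ ≤ ‖y - x₀‖ + τ * G := by
    rw [show xq - x₀ = (y - x₀) - τ • F₁ xq by rw [← hq]; abel]
    refine (norm_sub_le _ _).trans ?_
    rw [norm_smul, Real.norm_of_nonneg hτ]
    gcongr
    exact hG₁ _
  have hxt : ‖xt - x₀‖ ≤ ‖y - x₀‖ + 4 * τ * G := by
    rw [← sub_add_sub_cancel xt xq, davisYin_sub_eq_s15 hq ht]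
    refine (norm_add_le _ _).trans ?_
    rw [norm_neg, norm_smul, Real.norm_of_nonneg hτ]
    have := (norm_add₃_le ..).trans (add_le_add_three (hG₁ xq) (hG₂ xt) (hG₃ xq))
    linarith [mul_le_mul_of_nonneg_left this hτ]
  rw [show F₁ xq + F₂ xt + F₃ xq - (F₁ x₀ + F₂ x₀ + F₃ x₀) =
      (F₁ xq - F₁ x₀) + (F₂ xt - F₂ x₀) + (F₃ xq - F₃ x₀) by abel]
  refine (norm_add₃_le ..).trans ?_
  calc _ ≤ K * ‖xq - x₀‖ + K * ‖xt - x₀‖ + K * ‖xq - x₀‖ := by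
        gcongr ?_ + ?_ + ?_ <;> apply LipschitzWith.norm_sub_le <;> assumption
    _ ≤ K * (‖y - x₀‖ + τ * G) + K * (‖y - x₀‖ + 4 * τ * G) + K * (‖y - x₀‖ + τ * G) := by
        gcongr
    _ = K * (3 * ‖y - x₀‖ + 6 * τ * G) := by ring

end DavisYin

section DavisYinFlow

variable {E : Type*} [NormedAddCommGroup E] [NormedSpace ℝ E] {F₁ F₂ F₃ : E → E} {K : NNReal}
  {x v : ℝ → E} {xq xt : E} {r t T V G h : ℝ}

theorem norm_sub_davisYinStep_le (hF₁ : LipschitzWith K F₁) (hF₂ : LipschitzWith K F₂)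
    (hF₃ : LipschitzWith K F₃) (hG₁ : ∀ z, ‖F₁ z‖ ≤ G) (hG₂ : ∀ z, ‖F₂ z‖ ≤ G)
    (hG₃ : ∀ z, ‖F₃ z‖ ≤ G) (hr : 0 ≤ r) (ht : 0 < t)
    (hx : ∀ s ∈ Icc t T, HasDerivWithinAt x (v s) (Icc t T) s)
    (hv : ∀ s ∈ Icc t T,
      HasDerivWithinAt v (-((r / s) • v s) - (F₁ (x s) + F₂ (x s) + F₃ (x s))) (Icc t T) s)
    (hV : ∀ s ∈ Icc t T, ‖v s‖ ≤ V) (hh : 0 < h) (hh₁ : h ≤ 1) (hhT : t + h ≤ T)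
    (hq : xq + h ^ 2 • F₁ xq = x t + (h * (t / (t + r * h))) • v t)
    (hxt : xt + h ^ 2 • F₂ xt =
      (2 : ℝ) • xq - (x t + (h * (t / (t + r * h))) • v t) - h ^ 2 • F₃ xq) :
    ‖x (t + h) - (x t + (h * (t / (t + r * h))) • v t + xt - xq)‖ ≤
        2 * (r / t * V + 3 * G) * h ^ 2 ∧
      ‖v (t + h) - (1 / h) • (x t + (h * (t / (t + r * h))) • v t + xt - xq - x t)‖ ≤
        (r / t * (r / t * V + 3 * G) + r / t ^ 2 * V + (r / t) ^ 2 * V + 6 * K * (V + G)) *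
          h ^ 2 := by
  have hvt : ‖v t‖ ≤ V := hV t (left_mem_Icc.2 ((le_add_of_nonneg_right hh.le).trans hhT))
  have hG : 0 ≤ G := (norm_nonneg _).trans (hG₁ 0)
  have hΦB : ∀ z, ‖(F₁ + F₂ + F₃) z‖ ≤ 3 * G := fun z ↦
    (norm_add₃_le ..).trans (by linarith [hG₁ z, hG₂ z, hG₃ z])
  have hd : ‖F₁ xq + F₂ xt + F₃ xq‖ ≤ 3 * G :=
    (norm_add₃_le ..).trans (by linarith [hG₁ xq, hG₂ xt, hG₃ xq])
  have hdΦ : ‖F₁ xq + F₂ xt + F₃ xq - (F₁ + F₂ + F₃) (x t)‖ ≤ K * (3 * V + 6 * G) * h := by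
    refine (norm_davisYin_sub_le hF₁ hF₂ hF₃ hG₁ hG₂ hG₃ (sq_nonneg h) hq hxt).trans ?_
    rw [add_sub_cancel_left, norm_smul, Real.norm_of_nonneg (by positivity)]
    have hγ := div_add_mul_mem_Icc hr ht hh.le
    have hy : h * (t / (t + r * h)) * ‖v t‖ ≤ h * V := by
      rw [mul_assoc]
      gcongr
      exact (mul_le_of_le_one_left (norm_nonneg _) hγ.2).trans hvt
    have hh2 : h ^ 2 ≤ h := by nlinarith
    calc _ ≤ (K : ℝ) * (3 * (h * V) + 6 * h * G) := by gcongr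
      _ = K * (3 * V + 6 * G) * h := by ring
  rw [add_sub_assoc, davisYin_sub_eq_s15 hq hxt, ← sub_eq_add_neg]
  refine ⟨norm_position_sub_momentumStep_le (Φ := F₁ + F₂ + F₃) hr ht hΦB hx hv hV hh.le hhT hd,
    (norm_velocity_sub_momentumStep_le (Φ := F₁ + F₂ + F₃) hr ht hΦB ((hF₁.add hF₂).add hF₃) hx
      hv hV hh hhT hdΦ).trans_eq ?_⟩
  push_cast
  ring

end DavisYinFlow

theorem stmt_15_general {n : ℕ} (r : ℝ) (hr : 3 ≤ r)
    (f g w : EuclideanSpace ℝ (Fin n) → ℝ)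
    (L G : ℝ)
    (hfL : ∀ u v : EuclideanSpace ℝ (Fin n), ‖gradient f u - gradient f v‖ ≤ L * ‖u - v‖)
    (hgL : ∀ u v : EuclideanSpace ℝ (Fin n), ‖gradient g u - gradient g v‖ ≤ L * ‖u - v‖)
    (hwL : ∀ u v : EuclideanSpace ℝ (Fin n), ‖gradient w u - gradient w v‖ ≤ L * ‖u - v‖)
    (hfG : ∀ u, ‖gradient f u‖ ≤ G)
    (hgG : ∀ u, ‖gradient g u‖ ≤ G)
    (hwG : ∀ u, ‖gradient w u‖ ≤ G)
    (t : ℝ) (ht : 0 < t) (h₀ : ℝ) (hh₀ : h₀ ∈ Set.Ioc (0 : ℝ) 1) (V : ℝ)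
    (x v : ℝ → EuclideanSpace ℝ (Fin n))
    (hx : ∀ s ∈ Set.Icc t (t + h₀),
      HasDerivWithinAt x (v s) (Set.Icc t (t + h₀)) s)
    (hv : ∀ s ∈ Set.Icc t (t + h₀), HasDerivWithinAt v
      (-((r / s) • v s) - (gradient f (x s) + gradient g (x s) + gradient w (x s)))
      (Set.Icc t (t + h₀)) s)
    (hVb : ∀ s ∈ Set.Icc t (t + h₀), ‖v s‖ ≤ V) :
    ∃ C > 0, ∀ h : ℝ, 0 < h → h ≤ h₀ →
      ∀ xq xt : EuclideanSpace ℝ (Fin n),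
        xq + (h ^ 2) • gradient f xq = x t + (h * (t / (t + r * h))) • v t →
        xt + (h ^ 2) • gradient g xt =
          (((2 : ℝ) • xq - (x t + (h * (t / (t + r * h))) • v t))
            - (h ^ 2) • gradient w xq) →
        ‖x (t + h) - ((x t + (h * (t / (t + r * h))) • v t) + xt - xq)‖ ≤ C * h ^ 2 ∧
        ‖v (t + h) - (1 / h) • ((((x t + (h * (t / (t + r * h))) • v t) + xt - xq))
            - x t)‖ ≤ C * h ^ 2 := by
  obtain ⟨hh₀, hh₀₁⟩ := hh₀
  have hlip : ∀ φ : EuclideanSpace ℝ (Fin n) → ℝ,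
      (∀ u v, ‖gradient φ u - gradient φ v‖ ≤ L * ‖u - v‖) →
      LipschitzWith L.toNNReal (gradient φ) := fun φ hφ ↦
    LipschitzWith.of_dist_le' (by simpa only [dist_eq_norm] using hφ)
  refine ⟨max (max (2 * (r / t * V + 3 * G)) (r / t * (r / t * V + 3 * G) + r / t ^ 2 * V
    + (r / t) ^ 2 * V + 6 * L.toNNReal * (V + G))) 1, lt_max_of_lt_right one_pos,
    fun h hh hhh₀ xq xt hxq hxt ↦ ?_⟩
  obtain ⟨hpos, hvel⟩ := norm_sub_davisYinStep_le (hlip f hfL) (hlip g hgL) (hlip w hwL)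
    hfG hgG hwG (by linarith) ht hx hv hVb hh (by linarith) (by linarith) hxq hxt
  exact ⟨hpos.trans (by gcongr; exact (le_max_left _ _).trans (le_max_left _ _)),
    hvel.trans (by gcongr; exact (le_max_right _ _).trans (le_max_left _ _))⟩

/-- The accelerated Davis-Yin method with Nesterov-type decaying
damping `r/t` (momentum coefficient `t/(t+rh)`) is a first-order integrator of the
accelerated gradient flow `ẍ + (r/t)ẋ = -∇(f+g+w)(x)`. -/
theorem stmt_15 {n : ℕ} (r : ℝ) (hr : 3 ≤ r)
    (f g w : EuclideanSpace ℝ (Fin n) → ℝ)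
    (hfd : Differentiable ℝ f) (hgd : Differentiable ℝ g) (hwd : Differentiable ℝ w)
    (L G : ℝ)
    (hfL : ∀ u v : EuclideanSpace ℝ (Fin n), ‖gradient f u - gradient f v‖ ≤ L * ‖u - v‖)
    (hgL : ∀ u v : EuclideanSpace ℝ (Fin n), ‖gradient g u - gradient g v‖ ≤ L * ‖u - v‖)
    (hwL : ∀ u v : EuclideanSpace ℝ (Fin n), ‖gradient w u - gradient w v‖ ≤ L * ‖u - v‖)
    (hfG : ∀ u, ‖gradient f u‖ ≤ G)
    (hgG : ∀ u, ‖gradient g u‖ ≤ G)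
    (hwG : ∀ u, ‖gradient w u‖ ≤ G)
    (t : ℝ) (ht : 0 < t) (h₀ : ℝ) (hh₀ : h₀ ∈ Set.Ioc (0 : ℝ) 1) (V : ℝ) (hV : 0 ≤ V)
    (x v : ℝ → EuclideanSpace ℝ (Fin n))
    (hx : ∀ s ∈ Set.Icc t (t + h₀),
      HasDerivWithinAt x (v s) (Set.Icc t (t + h₀)) s)
    (hv : ∀ s ∈ Set.Icc t (t + h₀), HasDerivWithinAt v
      (-((r / s) • v s) - (gradient f (x s) + gradient g (x s) + gradient w (x s)))
      (Set.Icc t (t + h₀)) s)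
    (hVb : ∀ s ∈ Set.Icc t (t + h₀), ‖v s‖ ≤ V) :
    ∃ C > 0, ∀ h : ℝ, 0 < h → h ≤ h₀ →
      ∀ xq xt : EuclideanSpace ℝ (Fin n),
        xq + (h ^ 2) • gradient f xq = x t + (h * (t / (t + r * h))) • v t →
        xt + (h ^ 2) • gradient g xt =
          (((2 : ℝ) • xq - (x t + (h * (t / (t + r * h))) • v t))
            - (h ^ 2) • gradient w xq) →
        ‖x (t + h) - ((x t + (h * (t / (t + r * h))) • v t) + xt - xq)‖ ≤ C * h ^ 2 ∧
        ‖v (t + h) - (1 / h) • ((((x t + (h * (t / (t + r * h))) • v t) + xt - xq))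
            - x t)‖ ≤ C * h ^ 2 :=
  stmt_15_general r hr f g w L G hfL hgL hwL hfG hgG hwG t ht h₀ hh₀ V x v hx hv hVb
end
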